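/- arXiv:1506.00503 — 6 statements merged into one kernel-verified Lean document; each statement's English description precedes it below -/
import Mathlib

section
/- Let B_1,…,B_q ∈ ℤ^n and c_1,…,c_q ∈ ℤ, and define ψ_P(s) = ∏_{j=1}^q Γ(1 − ⟨B_j,s⟩ − c_j)^{-1} (with 1/Γ(z) = 0 at nonpositive integers z). Then the coefficients ψ_P satisfy a recursion with polynomial coefficients: for every k = 1,…,n and every s ∈ ℤ^n, ψ_P(s + e_k) · ∏_{j : B_{j,k} < 0} ∏_{ℓ=0}^{−B_{j,k}−1} (1 − ⟨B_j,s⟩ − c_j + ℓ) = ψ_P(s) · ∏_{j : B_{j,k} > 0} ∏_{ℓ=0}^{B_{j,k}−1} (−⟨B_j,s⟩ − c_j − ℓ), where e_k is the k-th standard basis vector of ℤ^n. (This is the hypergeometric recursion expressing that Σ ψ_P(s) x^s solves the Horn system defined by ψ_P.) -/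
/-- The Ore–Sato coefficient
`ψ_P(s) = ∏ⱼ Γ(1 − ⟨Bⱼ,s⟩ − cⱼ)⁻¹`.
(Mathlib's `Real.Gamma` vanishes at nonpositive integers, so `Γ(z)⁻¹ = 0` there.) -/
noncomputable def psiP {n q : ℕ} (B : Fin q → Fin n → ℤ) (c : Fin q → ℤ)
    (s : Fin n → ℤ) : ℝ :=
  ∏ j, (Real.Gamma (1 - ((∑ i, B j i * s i : ℤ) : ℝ) - ((c j : ℤ) : ℝ)))⁻¹

/-!
Each factor of `ψ_P` is `Γ(x)⁻¹` at a point `x` that moves by the integer `-B_{j,k}` when `s`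
moves to `s + e_k`. Iterating `Γ(x)⁻¹ = x ⬝ Γ(x + 1)⁻¹`, which holds everywhere because both sides
vanish at the poles, compares `Γ(x - b)⁻¹` with `Γ(x)⁻¹` through a rising product when `b < 0` and
a falling product when `b > 0`; the recursion is the product of these comparisons over `j`.
-/

open Finset

namespace Real

theorem inv_Gamma_eq_self_mul_inv_Gamma_add_one (x : ℝ) :
    (Gamma x)⁻¹ = x * (Gamma (x + 1))⁻¹ := by
  rcases ne_or_eq x 0 with h | rfl
  · rw [Gamma_add_one h, mul_inv, mul_inv_cancel_left₀ h]
  · rw [zero_add, Gamma_zero, inv_zero, zero_mul]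

theorem inv_Gamma_eq_prod_mul_inv_Gamma_add_nat (x : ℝ) (p : ℕ) :
    (Gamma x)⁻¹ = (∏ ℓ ∈ range p, (x + ℓ)) * (Gamma (x + p))⁻¹ := by
  induction p with
  | zero => simp
  | succ p ih =>
    rw [ih, inv_Gamma_eq_self_mul_inv_Gamma_add_one (x + p), prod_range_succ, Nat.cast_succ,
      add_assoc, mul_assoc]

theorem inv_Gamma_sub_nat_eq_prod_mul_inv_Gamma (x : ℝ) (p : ℕ) :
    (Gamma (x - p))⁻¹ = (∏ ℓ ∈ range p, (x - 1 - ℓ)) * (Gamma x)⁻¹ := by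
  induction p with
  | zero => simp
  | succ p ih =>
    rw [inv_Gamma_eq_self_mul_inv_Gamma_add_one, Nat.cast_succ, sub_add_eq_sub_sub,
      sub_add_cancel, ih, prod_range_succ, sub_right_comm x, mul_left_comm, mul_assoc]

/-- The two products are empty unless `b < 0`, resp. `0 < b`. -/
theorem inv_Gamma_sub_int_mul_prod (x : ℝ) (b : ℤ) :
    (Gamma (x - b))⁻¹ * ∏ ℓ ∈ range (-b).toNat, (x + ℓ) =
      (Gamma x)⁻¹ * ∏ ℓ ∈ range b.toNat, (x - 1 - ℓ) := by
  rcases le_or_gt 0 b with hb | hb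
  · obtain ⟨p, rfl⟩ := Int.eq_ofNat_of_zero_le hb
    rw [Int.toNat_natCast, Int.toNat_eq_zero.mpr (by omega), range_zero, prod_empty, mul_one,
      Int.cast_natCast, inv_Gamma_sub_nat_eq_prod_mul_inv_Gamma, mul_comm]
  · obtain ⟨p, hp⟩ := Int.eq_ofNat_of_zero_le (neg_nonneg.mpr hb.le)
    rw [hp, Int.toNat_natCast, Int.toNat_eq_zero.mpr hb.le, range_zero, prod_empty, mul_one,
      inv_Gamma_eq_prod_mul_inv_Gamma_add_nat x p, ← Int.cast_natCast, ← hp, Int.cast_neg,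
      ← sub_eq_add_neg, mul_comm]

end Real

theorem sum_mul_add_single_one {ι R : Type*} [Fintype ι] [DecidableEq ι] [NonAssocSemiring R]
    (v s : ι → R) (k : ι) :
    ∑ i, v i * (s + Pi.single k 1 : ι → R) i = ∑ i, v i * s i + v k :=
  (dotProduct_add v s _).trans (congrArg _ (dotProduct_single_one v k))

/-- The hypergeometric recursion with polynomial coefficients satisfied by the
coefficients `ψ_P`: for every `k` and every `s ∈ ℤⁿ`,
`ψ_P(s+e_k) ⬝ ∏_{j : B_{j,k}<0} ∏_{ℓ=0}^{−B_{j,k}−1} (1−⟨Bⱼ,s⟩−cⱼ+ℓ)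
  = ψ_P(s) ⬝ ∏_{j : B_{j,k}>0} ∏_{ℓ=0}^{B_{j,k}−1} (−⟨Bⱼ,s⟩−cⱼ−ℓ)`. -/
theorem psiP_recursion {n q : ℕ} (B : Fin q → Fin n → ℤ) (c : Fin q → ℤ)
    (k : Fin n) (s : Fin n → ℤ) :
    psiP B c (s + Pi.single k 1) *
        ∏ j ∈ Finset.univ.filter (fun j => B j k < 0),
          ∏ ℓ ∈ Finset.range (-B j k).toNat,
            (1 - ((∑ i, B j i * s i : ℤ) : ℝ) - ((c j : ℤ) : ℝ) + (ℓ : ℝ)) =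
      psiP B c s *
        ∏ j ∈ Finset.univ.filter (fun j => 0 < B j k),
          ∏ ℓ ∈ Finset.range (B j k).toNat,
            (-((∑ i, B j i * s i : ℤ) : ℝ) - ((c j : ℤ) : ℝ) - (ℓ : ℝ)) := by
  rw [prod_filter_of_ne fun j _ h => ?neg, prod_filter_of_ne fun j _ h => ?pos]
  · unfold psiP
    rw [← prod_mul_distrib, ← prod_mul_distrib]
    refine prod_congr rfl fun j _ => ?_
    rw [sum_mul_add_single_one]
    convert Real.inv_Gamma_sub_int_mul_prod (1 - ((∑ i, B j i * s i : ℤ) : ℝ) - c j) (B j k)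
      using 3 <;> push_cast <;> ring_nf
  case neg | pos =>
    by_contra hb
    exact h (by rw [Int.toNat_eq_zero.mpr (by omega), range_zero, prod_empty])
end

section
/- Let n ≥ 2 and let a_1,…,a_n, b_1,…,b_n, c be positive real numbers. The Laurent polynomial p(x) = c + Σ_{j=1}^n (a_j x_j + b_j x_j^{-1}), whose Newton polytope is the n-dimensional cross-polytope (with 2n+1 lattice points), is optimal — i.e. the complement ℝ^n ∖ 𝒜_p has exactly 2n+1 connected components — if and only if Σ_{j=1}^n √(a_j b_j) < c/2. -/
/-!
Put `x_j = e^{ξ_j + iθ_j}`. Then `a_j x_j + b_j / x_j` runs over the ellipse with semi-axes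
`A_j = a_j e^{ξ_j} + b_j e^{-ξ_j}` and `C_j = a_j e^{ξ_j} - b_j e^{-ξ_j}`, so `ξ` lies off the
amoeba iff `-c` is not in the Minkowski sum of these ellipses. That sum reaches `-c` as soon as
`c, A_1, …, A_n` satisfy the polygon inequalities (the two longest ellipses are matched by an
intermediate value argument, the others are used at `±A_j`). Hence the complement is covered by the
convex region `∑ A_j < c`, which is nonempty iff `∑ √(a_j b_j) < c / 2` as `min A_j = 2 √(a_j b_j)`,
and by the regions where one `A_J` dominates; there `C_J ≠ 0`, and each sign of `C_J` gives one
connected piece: increasing `|ξ_J|` only enlarges the dominant ellipse, so every point can be pushed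
into the lopsided part `c + ∑_{k ≠ J} A_k < |C_J|`, whose horizontal sections are convex.
-/

/-- The amoeba of a function on the complex torus `(ℂ∖{0})^n`. -/
def amoeba {n : ℕ} (f : (Fin n → ℂ) → ℂ) : Set (Fin n → ℝ) :=
  {ξ | ∃ x : Fin n → ℂ, (∀ j, x j ≠ 0) ∧ f x = 0 ∧
        ∀ j, ξ j = Real.log ‖x j‖}

open Set Finset Complex
open scoped Pointwise Function

section Components

variable {X ι : Type*} [TopologicalSpace X]

theorem natCard_connectedComponents_eq_of_partition {O : ι → Set X} (hopen : ∀ i, IsOpen (O i))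
    (hconn : ∀ i, IsPreconnected (O i)) (hdisj : Pairwise (Disjoint on O))
    (hcover : ∀ x, ∃ i, x ∈ O i) :
    Nat.card (ConnectedComponents X) = Nat.card {i // (O i).Nonempty} := by
  have hclosed : ∀ i, IsClosed (O i) := fun i => by
    have : (O i)ᶜ = ⋃ (j) (_ : j ≠ i), O j := by
      ext x
      obtain ⟨j, hj⟩ := hcover x
      simp only [mem_compl_iff, mem_iUnion]
      exact ⟨fun hx => ⟨j, fun h => hx (h ▸ hj), hj⟩,
        fun ⟨k, hki, hk⟩ hx => Set.disjoint_left.mp (hdisj hki) hk hx⟩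
    exact isOpen_compl_iff.mp (this ▸ isOpen_biUnion fun j _ => hopen j)
  have hcomp : ∀ i, ∀ x ∈ O i, connectedComponent x = O i := fun i x hx =>
    (IsClopen.connectedComponent_subset ⟨hclosed i, hopen i⟩ hx).antisymm
      ((hconn i).subset_connectedComponent hx)
  refine (Nat.card_eq_of_bijective (fun i => ConnectedComponents.mk i.2.some) ⟨?_, ?_⟩).symm
  · rintro ⟨i, hi⟩ ⟨j, hj⟩ hij
    rw [ConnectedComponents.coe_eq_coe, hcomp i _ hi.some_mem, hcomp j _ hj.some_mem] at hij
    by_contra hne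
    exact Set.disjoint_left.mp (hdisj (Subtype.coe_ne_coe.mpr hne)) hi.some_mem (hij ▸ hi.some_mem)
  · refine ConnectedComponents.surjective_coe.forall.mpr fun x => ?_
    obtain ⟨i, hi⟩ := hcover x
    exact ⟨⟨i, x, hi⟩, ConnectedComponents.coe_eq_coe.mpr <| by
      rw [hcomp i _ (Set.Nonempty.some_mem _), hcomp i x hi]⟩

theorem natCard_connectedComponents_subtype_eq_of_partition {S : Set X} {O : ι → Set X}
    (hopen : ∀ i, IsOpen (O i)) (hconn : ∀ i, IsPreconnected (S ∩ O i))
    (hdisj : Pairwise (Disjoint on O)) (hcover : S ⊆ ⋃ i, O i) :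
    Nat.card (ConnectedComponents S) = Nat.card {i // (S ∩ O i).Nonempty} := by
  have himage : ∀ i, ((↑) : S → X) '' ((↑) ⁻¹' O i) = S ∩ O i := fun i =>
    Subtype.image_preimage_coe S (O i)
  rw [natCard_connectedComponents_eq_of_partition (O := fun i => ((↑) : S → X) ⁻¹' O i)
    (fun i => (hopen i).preimage continuous_subtype_val)
    (fun i => Topology.IsInducing.subtypeVal.isPreconnected_image.mp (himage i ▸ hconn i))
    (fun i j hij => (hdisj hij).preimage _) (fun x => by simpa using hcover x.2)]
  exact Nat.card_congr <| Equiv.subtypeEquivRight fun i => by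
    rw [← himage i, Set.image_nonempty]

end Components

namespace CrossPolytopeAmoeba

def ellipse (A C : ℝ) : Set ℂ :=
  range fun θ : ℝ => ((A * Real.cos θ : ℝ) : ℂ) + ((C * Real.sin θ : ℝ) : ℂ) * I

section Ellipse

variable {A C : ℝ} {z : ℂ}

theorem ofReal_mem_ellipse (A C : ℝ) : (A : ℂ) ∈ ellipse A C :=
  ⟨0, by simp⟩

theorem neg_ofReal_mem_ellipse (A C : ℝ) : (-A : ℂ) ∈ ellipse A C :=
  ⟨Real.pi, by simp⟩

theorem neg_mem_ellipse (hz : z ∈ ellipse A C) : -z ∈ ellipse A C := by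
  obtain ⟨θ, rfl⟩ := hz
  exact ⟨θ + Real.pi, by simp [Real.cos_add_pi, Real.sin_add_pi]; ring⟩

theorem ellipse_neg_right (A C : ℝ) : ellipse A (-C) = ellipse A C := by
  have key : ∀ C : ℝ, ellipse A (-C) ⊆ ellipse A C := by
    rintro C _ ⟨θ, rfl⟩
    exact ⟨-θ, by simp⟩
  exact (key C).antisymm (by simpa using key (-C))

theorem ellipse_congr_abs {C' : ℝ} (h : |C| = |C'|) : ellipse A C = ellipse A C' := by
  rcases abs_eq_abs.mp h with rfl | rfl
  · rfl
  · exact ellipse_neg_right A C'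

theorem ofReal_mem_ellipse_zero {x : ℝ} (hx : |x| ≤ A) : (x : ℂ) ∈ ellipse A 0 := by
  refine ⟨Real.arccos (x / A), ?_⟩
  rcases ((abs_nonneg x).trans hx).eq_or_lt with rfl | hA
  · simp [abs_nonpos_iff.mp hx]
  · have hxA : |x / A| ≤ 1 := by rw [abs_div, abs_of_pos hA]; exact div_le_one_of_le₀ hx hA.le
    simp [Real.cos_arccos (abs_le.mp hxA).1 (abs_le.mp hxA).2, mul_div_cancel₀ _ hA.ne']

theorem exists_sq_norm_eq_of_mem_ellipse (hz : z ∈ ellipse A C) :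
    ∃ θ : ℝ, ‖z‖ ^ 2 = A ^ 2 * Real.cos θ ^ 2 + C ^ 2 * Real.sin θ ^ 2 := by
  obtain ⟨θ, rfl⟩ := hz
  exact ⟨θ, by rw [Complex.sq_norm, normSq_add_mul_I]; ring⟩

theorem norm_le_of_mem_ellipse (hCA : |C| ≤ A) (hz : z ∈ ellipse A C) : ‖z‖ ≤ A := by
  obtain ⟨θ, hθ⟩ := exists_sq_norm_eq_of_mem_ellipse hz
  have hC : C ^ 2 ≤ A ^ 2 := sq_le_sq' (abs_le.mp hCA).1 (abs_le.mp hCA).2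
  refine (sq_le_sq₀ (norm_nonneg z) ((abs_nonneg C).trans hCA)).mp ?_
  nlinarith [Real.sin_sq_add_cos_sq θ, sq_nonneg (Real.sin θ)]

theorem abs_le_norm_of_mem_ellipse (hCA : |C| ≤ A) (hz : z ∈ ellipse A C) : |C| ≤ ‖z‖ := by
  obtain ⟨θ, hθ⟩ := exists_sq_norm_eq_of_mem_ellipse hz
  have hC : C ^ 2 ≤ A ^ 2 := sq_le_sq' (abs_le.mp hCA).1 (abs_le.mp hCA).2
  refine (sq_le_sq₀ (abs_nonneg C) (norm_nonneg z)).mp ?_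
  rw [sq_abs]
  nlinarith [Real.sin_sq_add_cos_sq θ, sq_nonneg (Real.cos θ)]

theorem one_le_of_mem_ellipse {A' C' : ℝ} (hA : A ≠ 0) (hC : C ≠ 0) (hAA' : |A| ≤ |A'|)
    (hCC' : |C| ≤ |C'|) (hz : z ∈ ellipse A' C') : 1 ≤ (z.re / A) ^ 2 + (z.im / C) ^ 2 := by
  obtain ⟨θ, rfl⟩ := hz
  have hscale : ∀ {u v : ℝ} (t : ℝ), u ≠ 0 → |u| ≤ |v| → t ^ 2 ≤ (v * t / u) ^ 2 :=
    fun t hu huv => by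
      rw [mul_div_right_comm, mul_pow]
      refine le_mul_of_one_le_left (sq_nonneg t) ?_
      rw [div_pow, one_le_div (by positivity)]
      exact sq_le_sq.mpr huv
  simp only [add_re, ofReal_re, mul_re, I_re, ofReal_im, I_im, add_im, mul_im, mul_zero, sub_zero,
    mul_one, add_zero, zero_add]
  linarith [hscale (Real.cos θ) hA hAA', hscale (Real.sin θ) hC hCC', Real.cos_sq_add_sin_sq θ]

theorem mem_ellipse_of_sq_add_sq (hA : A ≠ 0) (hC : C ≠ 0)
    (h : (z.re / A) ^ 2 + (z.im / C) ^ 2 = 1) : z ∈ ellipse A C := by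
  set u : ℂ := ((z.re / A : ℝ) : ℂ) + ((z.im / C : ℝ) : ℂ) * I
  have hu : ‖u‖ = 1 := by rw [norm_add_mul_I, h, Real.sqrt_one]
  have hu0 : u ≠ 0 := norm_ne_zero_iff.mp (by rw [hu]; exact one_ne_zero)
  refine ⟨u.arg, ?_⟩
  dsimp only
  rw [cos_arg hu0, sin_arg, hu, div_one, div_one]
  apply Complex.ext <;> simp [u, mul_div_cancel₀ _ hA, mul_div_cancel₀ _ hC]

theorem mem_ellipse_add_of_mem_ellipse_add {W : Set ℂ} (hW : IsPreconnected W) {A' C' : ℝ}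
    {w₀ : ℂ} (hA : A ≠ 0) (hC : C ≠ 0) (hw₀ : w₀ ∈ W)
    (hin : ((z - w₀).re / A) ^ 2 + ((z - w₀).im / C) ^ 2 < 1)
    (hAA' : |A| ≤ |A'|) (hCC' : |C| ≤ |C'|) (h : z ∈ ellipse A' C' + W) :
    z ∈ ellipse A C + W := by
  obtain ⟨e, he, w₁, hw₁, rfl⟩ := h
  set F : ℂ → ℝ := fun w => ((e + w₁ - w).re / A) ^ 2 + ((e + w₁ - w).im / C) ^ 2
  have hF₁ : 1 ≤ F w₁ := by simpa [F] using one_le_of_mem_ellipse hA hC hAA' hCC' he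
  obtain ⟨w, hw, hFw⟩ := hW.intermediate_value hw₀ hw₁ (by fun_prop) ⟨hin.le, hF₁⟩
  exact ⟨e + w₁ - w, mem_ellipse_of_sq_add_sq hA hC hFw, w, hw, sub_add_cancel _ _⟩

theorem ofReal_mem_ellipse_add_ellipse_of_abs_le {A₁ A₂ C₁ C₂ w : ℝ} (hC : |C₂| ≤ |C₁|)
    (hw₁ : A₁ - A₂ ≤ w) (hw₂ : w ≤ A₁ + A₂) :
    (w : ℂ) ∈ ellipse A₁ C₁ + ellipse A₂ C₂ := by
  set μ := C₂ / C₁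
  -- if `C₁ = 0` then also `C₂ = 0`, and the junk value `C₂ / 0 = 0` still works
  have hCμ : C₁ * μ = C₂ := by
    rcases eq_or_ne C₁ 0 with h | h
    · simp_all
    · exact mul_div_cancel₀ _ h
  have hμsin : ∀ t, |μ * Real.sin t| ≤ 1 := fun t => by
    rw [abs_mul, abs_div]
    exact mul_le_one₀ (div_le_one_of_le₀ hC (abs_nonneg _)) (abs_nonneg _) (Real.abs_sin_le_one t)
  -- the second point moves along half of its ellipse, the first one cancels its imaginary part
  set F : ℝ → ℝ := fun t => A₁ * Real.cos (Real.arcsin (μ * Real.sin t)) + A₂ * Real.cos t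
  obtain ⟨t, -, hFt⟩ := intermediate_value_Icc' Real.pi_pos.le (f := F) (by fun_prop)
    (show w ∈ Icc (F Real.pi) (F 0) by simpa [F] using ⟨by linarith, hw₂⟩)
  refine ⟨_, ⟨-Real.arcsin (μ * Real.sin t), rfl⟩, _, ⟨t, rfl⟩, ?_⟩
  have him : C₁ * Real.sin (-Real.arcsin (μ * Real.sin t)) + C₂ * Real.sin t = 0 := by
    rw [Real.sin_neg, Real.sin_arcsin (abs_le.mp (hμsin t)).1 (abs_le.mp (hμsin t)).2, ← hCμ]
    ring
  apply Complex.ext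
  · simp only [add_re, ofReal_re, mul_re, I_re, ofReal_im, I_im, Real.cos_neg, ← hFt, F]
    ring
  · simp only [add_im, ofReal_re, mul_im, I_re, ofReal_im, I_im, zero_add]
    simpa using him

theorem ofReal_mem_ellipse_add_ellipse {A₁ A₂ C₁ C₂ w : ℝ} (hw₁ : |A₁ - A₂| ≤ |w|)
    (hw₂ : |w| ≤ A₁ + A₂) : (w : ℂ) ∈ ellipse A₁ C₁ + ellipse A₂ C₂ := by
  wlog hw : 0 ≤ w generalizing w
  · obtain ⟨e₁, he₁, e₂, he₂, h⟩ := this (w := -w) (by rwa [abs_neg]) (by rwa [abs_neg])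
      (by linarith)
    exact ⟨-e₁, neg_mem_ellipse he₁, -e₂, neg_mem_ellipse he₂, by
      push_cast at h; linear_combination -h⟩
  rw [abs_of_nonneg hw] at hw₁ hw₂
  rcases le_total |C₂| |C₁| with hC | hC
  · exact ofReal_mem_ellipse_add_ellipse_of_abs_le hC ((le_abs_self _).trans hw₁) hw₂
  · rw [add_comm]
    exact ofReal_mem_ellipse_add_ellipse_of_abs_le hC
      ((le_abs_self _).trans (abs_sub_comm A₁ A₂ ▸ hw₁)) (by linarith)

end Ellipse

section MinkowskiSum

variable {ι : Type*} {A C : ι → ℝ}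

theorem mem_sum_ellipse {s : Finset ι} {z : ℂ} :
    z ∈ ∑ k ∈ s, ellipse (A k) (C k) ↔ ∃ θ : ι → ℝ,
      ∑ k ∈ s, (((A k * Real.cos (θ k) : ℝ) : ℂ) + ((C k * Real.sin (θ k) : ℝ) : ℂ) * I) = z := by
  rw [Set.mem_finsetSum]
  constructor
  · rintro ⟨g, hg, rfl⟩
    choose! θ hθ using fun k (hk : k ∈ s) => hg hk
    exact ⟨θ, Finset.sum_congr rfl hθ⟩
  · rintro ⟨θ, rfl⟩
    exact ⟨_, fun {k} _ => ⟨θ k, rfl⟩, rfl⟩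

theorem isPreconnected_sum_ellipse (s : Finset ι) :
    IsPreconnected (∑ k ∈ s, ellipse (A k) (C k)) := by
  have : ∑ k ∈ s, ellipse (A k) (C k) = range fun θ : ι → ℝ =>
      ∑ k ∈ s, (((A k * Real.cos (θ k) : ℝ) : ℂ) + ((C k * Real.sin (θ k) : ℝ) : ℂ) * I) := by
    ext z
    exact mem_sum_ellipse
  rw [this]
  exact isPreconnected_range (by fun_prop)

theorem neg_sum_mem_sum_ellipse (s : Finset ι) :
    ((-∑ k ∈ s, A k : ℝ) : ℂ) ∈ ∑ k ∈ s, ellipse (A k) (C k) :=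
  mem_sum_ellipse.mpr ⟨fun _ => Real.pi, by simp⟩

theorem norm_le_of_mem_sum_ellipse {s : Finset ι} {z : ℂ} (hCA : ∀ k ∈ s, |C k| ≤ A k)
    (hz : z ∈ ∑ k ∈ s, ellipse (A k) (C k)) : ‖z‖ ≤ ∑ k ∈ s, A k := by
  obtain ⟨g, hg, rfl⟩ := Set.mem_finsetSum _ _ _ |>.mp hz
  exact (norm_sum_le _ _).trans
    (Finset.sum_le_sum fun k hk => norm_le_of_mem_ellipse (hCA k hk) (hg hk))

/-- A discrete intermediate value theorem: moving from `x` by steps `± A l` of size at most `B`,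
one can stop inside any window of width `2 B` between `x - ∑ A` and `x + ∑ A`. -/
theorem exists_ofReal_mem_sum_ellipse_mem_Icc [DecidableEq ι] {s : Finset ι} {B D x : ℝ}
    (hA : ∀ l ∈ s, 0 ≤ A l) (hAB : ∀ l ∈ s, A l ≤ B)
    (h₁ : D - B ≤ x + ∑ l ∈ s, A l) (h₂ : x - ∑ l ∈ s, A l ≤ D + B) :
    ∃ r : ℝ, (r : ℂ) ∈ ∑ l ∈ s, ellipse (A l) (C l) ∧ x + r ∈ Icc (D - B) (D + B) := by
  induction s using Finset.induction_on generalizing x with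
  | empty => exact ⟨0, by simp, by simpa using h₁, by simpa using h₂⟩
  | insert a s ha ih =>
    simp only [Finset.forall_mem_insert, Finset.sum_insert ha] at hA hAB h₁ h₂ ⊢
    have hs : 0 ≤ ∑ l ∈ s, A l := Finset.sum_nonneg hA.2
    by_cases hx : x + A a - ∑ l ∈ s, A l ≤ D + B
    · obtain ⟨r, hr, hxr⟩ := ih hA.2 hAB.2 (x := x + A a) (by linarith) hx
      exact ⟨A a + r, by push_cast; exact Set.add_mem_add (ofReal_mem_ellipse _ _) hr,
        by rw [← add_assoc]; exact hxr⟩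
    · obtain ⟨r, hr, hxr⟩ := ih hA.2 hAB.2 (x := x - A a) (by linarith) (by linarith)
      exact ⟨-A a + r, by push_cast; exact Set.add_mem_add (neg_ofReal_mem_ellipse _ _) hr,
        by rw [← add_assoc, ← sub_eq_add_neg]; exact hxr⟩

variable [Fintype ι] [DecidableEq ι] {c : ℝ}

theorem neg_mem_sum_ellipse_of_polygon_ineq (hA : ∀ j, 0 ≤ A j) (hc : 0 ≤ c)
    (hsum : c ≤ ∑ j, A j) (hpoly : ∀ J, A J ≤ c + ∑ k ∈ univ.erase J, A k) :
    (-c : ℂ) ∈ ∑ j, ellipse (A j) (C j) := by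
  rcases isEmpty_or_nonempty ι with hι | hι
  · obtain rfl : c = 0 := le_antisymm (by simpa using hsum) hc
    simp
  obtain ⟨J, -, hJ⟩ := Finset.exists_max_image univ A univ_nonempty
  have hsumJ := Finset.add_sum_erase _ A (mem_univ J)
  rw [← Finset.add_sum_erase _ _ (mem_univ J)]
  rcases (univ.erase J).eq_empty_or_nonempty with hK | hK
  · have hcJ : c = A J := by
      have := hpoly J
      rw [hK, Finset.sum_empty] at this hsumJ
      linarith
    simpa [hK, hcJ] using neg_ofReal_mem_ellipse (A J) (C J)
  obtain ⟨K, hKJ, hK⟩ := Finset.exists_max_image _ A hK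
  have hsumK := Finset.add_sum_erase _ A hKJ
  rw [← Finset.add_sum_erase _ _ hKJ, ← add_assoc]
  obtain ⟨r, hr, hcr⟩ := exists_ofReal_mem_sum_ellipse_mem_Icc (C := C) (x := c) (D := A J)
    (s := (univ.erase J).erase K) (fun l _ => hA l) (fun l hl => hK l (mem_of_mem_erase hl))
    (by linarith [hpoly J]) (by linarith)
  have hKJ' := hJ K (mem_univ K)
  have hcr₀ : 0 ≤ c + r := by linarith [hcr.1]
  have hpair := ofReal_mem_ellipse_add_ellipse (C₁ := C J) (C₂ := C K) (w := -(c + r))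
    (by rw [abs_neg, abs_of_nonneg (sub_nonneg.mpr hKJ'), abs_of_nonneg hcr₀]; exact hcr.1)
    (by rw [abs_neg, abs_of_nonneg hcr₀]; exact hcr.2)
  convert Set.add_mem_add hpair hr using 1
  push_cast; ring

theorem neg_mem_sum_ellipse_of_eq_zero {J : ι} (hC : C J = 0)
    (h : |c - ∑ k ∈ univ.erase J, A k| ≤ A J) : (-c : ℂ) ∈ ∑ j, ellipse (A j) (C j) := by
  rw [← Finset.add_sum_erase _ _ (mem_univ J), hC]
  have hJ := ofReal_mem_ellipse_zero (A := A J) (x := ∑ k ∈ univ.erase J, A k - c)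
    (by rwa [abs_sub_comm])
  convert Set.add_mem_add hJ (neg_sum_mem_sum_ellipse (C := C) (univ.erase J)) using 1
  push_cast; ring

/-- `hdom` places `∑_{k ≠ J} A k - c`, which the `J`-th term must supply when every other term
sits at `-A k`, strictly inside `ellipse (A J) (C J)`. -/
theorem neg_mem_sum_ellipse_of_mem_enlarged {A' C' : ι → ℝ} {J : ι}
    (hdom : |c - ∑ k ∈ univ.erase J, A k| < A J) (hC : C J ≠ 0) (hA : A J ≤ A' J)
    (hC' : |C J| ≤ |C' J|) (hAk : ∀ k ≠ J, A' k = A k) (hCk : ∀ k ≠ J, C' k = C k)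
    (h : (-c : ℂ) ∈ ∑ j, ellipse (A' j) (C' j)) : (-c : ℂ) ∈ ∑ j, ellipse (A j) (C j) := by
  have hAJ : 0 < A J := (abs_nonneg _).trans_lt hdom
  have hrest : ∑ k ∈ univ.erase J, ellipse (A' k) (C' k) =
      ∑ k ∈ univ.erase J, ellipse (A k) (C k) :=
    Finset.sum_congr rfl fun k hk => by rw [hAk k (ne_of_mem_erase hk), hCk k (ne_of_mem_erase hk)]
  rw [← Finset.add_sum_erase _ _ (mem_univ J), hrest] at h
  rw [← Finset.add_sum_erase _ _ (mem_univ J)]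
  refine mem_ellipse_add_of_mem_ellipse_add (isPreconnected_sum_ellipse _) hAJ.ne' hC
    (neg_sum_mem_sum_ellipse _) ?_ (by rwa [abs_of_pos hAJ, abs_of_pos (hAJ.trans_le hA)]) hC' h
  have hw : (-c : ℂ) - ((-∑ k ∈ univ.erase J, A k : ℝ) : ℂ) =
      ((∑ k ∈ univ.erase J, A k - c : ℝ) : ℂ) := by
    push_cast; ring
  rw [hw, ofReal_re, ofReal_im, zero_div, sq (0 : ℝ), mul_zero, add_zero, sq_lt_one_iff_abs_lt_one,
    abs_div, abs_of_pos hAJ, div_lt_one hAJ, abs_sub_comm]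
  exact hdom

theorem neg_notMem_sum_ellipse_of_lopsided {J : ι} (hCA : ∀ k, |C k| ≤ A k) (hc : 0 ≤ c)
    (h : c + ∑ k ∈ univ.erase J, A k < |C J|) : (-c : ℂ) ∉ ∑ j, ellipse (A j) (C j) := by
  rw [← Finset.add_sum_erase _ _ (mem_univ J)]
  rintro ⟨z, hz, w, hw, hzw⟩
  have hw' := norm_le_of_mem_sum_ellipse (fun k _ => hCA k) hw
  have : ‖z‖ ≤ c + ‖w‖ := by
    rw [eq_sub_of_add_eq hzw]
    refine (norm_sub_le _ _).trans ?_
    rw [norm_neg, norm_real, Real.norm_eq_abs, abs_of_nonneg hc]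
  linarith [abs_le_norm_of_mem_ellipse (hCA J) hz]

end MinkowskiSum

section Laurent

theorem laurent_polar (a b t θ : ℝ) :
    (a : ℂ) * (cexp t * cexp (θ * I)) + b * (cexp t * cexp (θ * I))⁻¹ =
      (((a * Real.exp t + b * Real.exp (-t)) * Real.cos θ : ℝ) : ℂ) +
        (((a * Real.exp t - b * Real.exp (-t)) * Real.sin θ : ℝ) : ℂ) * I := by
  rw [mul_inv, ← Complex.exp_neg, ← Complex.exp_neg, ← neg_mul, exp_mul_I, exp_mul_I]
  push_cast
  simp only [Complex.cos_neg, Complex.sin_neg, Complex.exp_neg]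
  ring

/-- On the torus `|xⱼ| = e^{ξⱼ}` the term `aⱼ xⱼ + bⱼ / xⱼ` runs over
`ellipse (axisRe a b ξ j) (axisIm a b ξ j)`, by `laurent_polar`. -/
noncomputable def axisRe {ι : Type*} (a b ξ : ι → ℝ) (j : ι) : ℝ :=
  a j * Real.exp (ξ j) + b j * Real.exp (-ξ j)

noncomputable def axisIm {ι : Type*} (a b ξ : ι → ℝ) (j : ι) : ℝ :=
  a j * Real.exp (ξ j) - b j * Real.exp (-ξ j)

/-- The complement of the amoeba of `c + ∑ⱼ (aⱼ xⱼ + bⱼ / xⱼ)`, see `compl_amoeba_eq`. -/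
def amoebaComplement {ι : Type*} [Fintype ι] (a b : ι → ℝ) (c : ℝ) : Set (ι → ℝ) :=
  {ξ | (-c : ℂ) ∉ ∑ j, ellipse (axisRe a b ξ j) (axisIm a b ξ j)}

theorem compl_amoeba_eq {n : ℕ} (a b : Fin n → ℝ) (c : ℝ) :
    (amoeba fun x : Fin n → ℂ => (c : ℂ) + ∑ j, ((a j : ℂ) * x j + (b j : ℂ) * (x j)⁻¹))ᶜ =
      amoebaComplement a b c := by
  ext ξ
  refine not_congr ⟨?_, fun h => ?_⟩
  · rintro ⟨x, hx0, hfx, hξ⟩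
    refine (Set.mem_finsetSum _ _ _).mpr ⟨fun j => a j * x j + b j * (x j)⁻¹, fun {j} _ => ?_,
      eq_neg_of_add_eq_zero_right hfx⟩
    have hx : x j = cexp (ξ j) * cexp ((x j).arg * I) := by
      rw [hξ j, ← ofReal_exp, Real.exp_log (norm_pos_iff.mpr (hx0 j)), norm_mul_exp_arg_mul_I]
    have hpolar := laurent_polar (a j) (b j) (ξ j) (x j).arg
    rw [← hx] at hpolar
    exact ⟨(x j).arg, hpolar.symm⟩
  · obtain ⟨θ, hθ⟩ := mem_sum_ellipse.mp h
    refine ⟨fun j => cexp (ξ j) * cexp (θ j * I), fun j => by simp [Complex.exp_ne_zero],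
      ?_, fun j => by simp [norm_exp_ofReal_mul_I]⟩
    simp only [laurent_polar]
    rw [← add_neg_cancel (c : ℂ), ← hθ]
    rfl

end Laurent

section Axes

theorem mul_exp_sub_mul_exp_neg_monotone {a b : ℝ} (ha : 0 ≤ a) (hb : 0 ≤ b) :
    Monotone fun t => a * Real.exp t - b * Real.exp (-t) := fun t s hts => by
  have h₁ := Real.exp_le_exp.mpr hts
  have h₂ := Real.exp_le_exp.mpr (neg_le_neg hts)
  dsimp only
  nlinarith [mul_le_mul_of_nonneg_left h₁ ha, mul_le_mul_of_nonneg_left h₂ hb]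

theorem mul_exp_add_mul_exp_neg_le {a b t s : ℝ} (hb : 0 ≤ b)
    (h : 0 ≤ a * Real.exp t - b * Real.exp (-t)) (hts : t ≤ s) :
    a * Real.exp t + b * Real.exp (-t) ≤ a * Real.exp s + b * Real.exp (-s) := by
  have key : a * Real.exp s + b * Real.exp (-s) - (a * Real.exp t + b * Real.exp (-t)) =
      (Real.exp (s - t) - 1) * (a * Real.exp t - b * Real.exp (-s)) := by
    rw [Real.exp_sub, Real.exp_neg, Real.exp_neg]
    field_simp
    ring
  have h₁ : 0 ≤ Real.exp (s - t) - 1 := by linarith [Real.add_one_le_exp (s - t)]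
  have h₂ : b * Real.exp (-s) ≤ b * Real.exp (-t) :=
    mul_le_mul_of_nonneg_left (Real.exp_le_exp.mpr (neg_le_neg hts)) hb
  nlinarith [mul_nonneg h₁ (by linarith : 0 ≤ a * Real.exp t - b * Real.exp (-s))]

theorem exists_ge_lt_mul_exp_sub_mul_exp_neg {a : ℝ} (ha : 0 < a) (b M t₀ : ℝ) :
    ∃ T, t₀ ≤ T ∧ M < a * Real.exp T - b * Real.exp (-T) := by
  have : Filter.Tendsto (fun t => a * Real.exp t - b * Real.exp (-t)) .atTop .atTop := by
    simpa [sub_eq_add_neg] using (Real.tendsto_exp_atTop.const_mul_atTop ha).atTop_add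
      ((Real.tendsto_exp_neg_atTop_nhds_zero.const_mul b).neg)
  exact ((Filter.eventually_ge_atTop t₀).and (this.eventually_gt_atTop M)).exists

variable {ι : Type*} {a b : ι → ℝ} {ξ : ι → ℝ} {j : ι}

theorem axisRe_nonneg (ha : 0 ≤ a j) (hb : 0 ≤ b j) : 0 ≤ axisRe a b ξ j := by
  unfold axisRe
  positivity

theorem abs_axisIm_le_axisRe (ha : 0 ≤ a j) (hb : 0 ≤ b j) : |axisIm a b ξ j| ≤ axisRe a b ξ j := by
  have h₁ : 0 ≤ a j * Real.exp (ξ j) := by positivity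
  have h₂ : 0 ≤ b j * Real.exp (-ξ j) := by positivity
  exact abs_le.mpr ⟨by unfold axisIm axisRe; linarith, by unfold axisIm axisRe; linarith⟩

theorem two_sqrt_mul_le_axisRe (ha : 0 ≤ a j) (hb : 0 ≤ b j) :
    2 * √(a j * b j) ≤ axisRe a b ξ j := by
  have hprod : a j * b j = (a j * Real.exp (ξ j)) * (b j * Real.exp (-ξ j)) := by
    rw [mul_mul_mul_comm, ← Real.exp_add, add_neg_cancel, Real.exp_zero, mul_one]
  have h₁ : 0 ≤ a j * Real.exp (ξ j) := by positivity
  have h₂ : 0 ≤ b j * Real.exp (-ξ j) := by positivity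
  have := two_mul_le_add_sq √(a j * Real.exp (ξ j)) √(b j * Real.exp (-ξ j))
  rwa [Real.sq_sqrt h₁, Real.sq_sqrt h₂, mul_assoc, ← Real.sqrt_mul h₁, ← hprod] at this

theorem axisRe_log_sqrt_div (ha : 0 < a j) (hb : 0 < b j) :
    axisRe a b (fun k => Real.log (√(b k) / √(a k))) j = 2 * √(a j * b j) := by
  have hsa := Real.sqrt_pos.mpr ha
  have hsb := Real.sqrt_pos.mpr hb
  rw [axisRe, Real.exp_neg, Real.exp_log (div_pos hsb hsa), inv_div, Real.sqrt_mul ha.le]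
  field_simp
  rw [Real.sq_sqrt ha.le, Real.sq_sqrt hb.le]
  ring

@[fun_prop]
theorem continuous_axisRe (j : ι) : Continuous fun ξ => axisRe a b ξ j := by
  unfold axisRe; fun_prop

@[fun_prop]
theorem continuous_axisIm (j : ι) : Continuous fun ξ => axisIm a b ξ j := by
  unfold axisIm; fun_prop

theorem convexOn_sum_axisRe (ha : ∀ j, 0 ≤ a j) (hb : ∀ j, 0 ≤ b j) (s : Finset ι) :
    ConvexOn ℝ univ fun ξ => ∑ k ∈ s, axisRe a b ξ k := by
  classical
  induction s using Finset.induction_on with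
  | empty => simpa using convexOn_const (0 : ℝ) convex_univ
  | insert k s hk ih =>
    have hexp := convexOn_exp.comp_linearMap (LinearMap.proj (R := ℝ) (φ := fun _ : ι => ℝ) k)
    have hexp' := convexOn_exp.comp_linearMap (-LinearMap.proj (R := ℝ) (φ := fun _ : ι => ℝ) k)
    refine (((hexp.smul (ha k)).add (hexp'.smul (hb k))).add ih).congr fun ξ _ => ?_
    simp [Finset.sum_insert hk, axisRe]

variable [DecidableEq ι]

@[simp]
theorem axisRe_update_self (s : ℝ) :
    axisRe a b (Function.update ξ j s) j = a j * Real.exp s + b j * Real.exp (-s) := by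
  simp [axisRe]

@[simp]
theorem axisIm_update_self (s : ℝ) :
    axisIm a b (Function.update ξ j s) j = a j * Real.exp s - b j * Real.exp (-s) := by
  simp [axisIm]

@[simp]
theorem axisRe_update_of_ne {k : ι} (h : k ≠ j) (s : ℝ) :
    axisRe a b (Function.update ξ j s) k = axisRe a b ξ k := by
  simp [axisRe, h]

@[simp]
theorem axisIm_update_of_ne {k : ι} (h : k ≠ j) (s : ℝ) :
    axisIm a b (Function.update ξ j s) k = axisIm a b ξ k := by
  simp [axisIm, h]

theorem sum_erase_axisRe_update [Fintype ι] (s : ℝ) :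
    ∑ k ∈ univ.erase j, axisRe a b (Function.update ξ j s) k = ∑ k ∈ univ.erase j, axisRe a b ξ k :=
  Finset.sum_congr rfl fun _ hk => axisRe_update_of_ne (ne_of_mem_erase hk) s

end Axes

section Regions

variable {ι : Type*} [Fintype ι]

noncomputable def centralRegion (a b : ι → ℝ) (c : ℝ) : Set (ι → ℝ) :=
  {ξ | ∑ j, axisRe a b ξ j < c}

noncomputable def dominantRegion [DecidableEq ι] (a b : ι → ℝ) (c : ℝ) (J : ι) :
    Set (ι → ℝ) :=
  {ξ | c + ∑ k ∈ univ.erase J, axisRe a b ξ k < axisRe a b ξ J}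

variable {a b : ι → ℝ} {c : ℝ}

theorem centralRegion_subset (ha : ∀ j, 0 ≤ a j) (hb : ∀ j, 0 ≤ b j) :
    centralRegion a b c ⊆ amoebaComplement a b c := fun ξ hξ hmem => by
  have := norm_le_of_mem_sum_ellipse (fun j _ => abs_axisIm_le_axisRe (ha j) (hb j)) hmem
  rw [norm_neg, norm_real, Real.norm_eq_abs] at this
  exact (hξ.trans_le (le_abs_self c)).not_ge this

theorem convex_centralRegion (ha : ∀ j, 0 ≤ a j) (hb : ∀ j, 0 ≤ b j) :
    Convex ℝ (centralRegion a b c) := by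
  have := (convexOn_sum_axisRe ha hb univ).convex_lt c
  simp only [Set.mem_univ, true_and] at this
  exact this

theorem centralRegion_nonempty_iff (ha : ∀ j, 0 < a j) (hb : ∀ j, 0 < b j) :
    (centralRegion a b c).Nonempty ↔ ∑ j, √(a j * b j) < c / 2 := by
  constructor
  · rintro ⟨ξ, hξ⟩
    have := Finset.sum_le_sum fun j (_ : j ∈ Finset.univ) =>
      two_sqrt_mul_le_axisRe (ξ := ξ) (ha j).le (hb j).le
    rw [← Finset.mul_sum] at this
    exact (lt_div_iff₀' two_pos).mpr (this.trans_lt hξ)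
  · intro h
    refine ⟨fun k => Real.log (√(b k) / √(a k)), ?_⟩
    simp only [centralRegion, mem_ofPred_eq, axisRe_log_sqrt_div (ha _) (hb _), ← Finset.mul_sum]
    linarith

theorem isOpen_centralRegion : IsOpen (centralRegion a b c) :=
  isOpen_lt (by fun_prop) continuous_const

variable [DecidableEq ι]

theorem isOpen_dominantRegion (J : ι) : IsOpen (dominantRegion a b c J) :=
  isOpen_lt (by fun_prop) (by fun_prop)

theorem disjoint_centralRegion_dominantRegion (ha : ∀ j, 0 ≤ a j) (hb : ∀ j, 0 ≤ b j) (J : ι) :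
    Disjoint (centralRegion a b c) (dominantRegion a b c J) := by
  refine Set.disjoint_left.mpr fun ξ h₀ hJ => ?_
  simp only [centralRegion, dominantRegion, mem_ofPred_eq] at h₀ hJ
  rw [← Finset.add_sum_erase _ _ (mem_univ J)] at h₀
  linarith [Finset.sum_nonneg fun k (_ : k ∈ univ.erase J) => axisRe_nonneg (ξ := ξ) (ha k) (hb k)]

theorem disjoint_dominantRegion (ha : ∀ j, 0 ≤ a j) (hb : ∀ j, 0 ≤ b j) (hc : 0 ≤ c) {J K : ι}
    (hJK : J ≠ K) : Disjoint (dominantRegion a b c J) (dominantRegion a b c K) := by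
  refine Set.disjoint_left.mpr fun ξ hJ hK => ?_
  simp only [dominantRegion, mem_ofPred_eq] at hJ hK
  have hpos : ∀ k, 0 ≤ axisRe a b ξ k := fun k => axisRe_nonneg (ha k) (hb k)
  have hKJ := Finset.single_le_sum (fun k _ => hpos k) (mem_erase.mpr ⟨hJK.symm, mem_univ K⟩)
  have hJK := Finset.single_le_sum (fun k _ => hpos k) (mem_erase.mpr ⟨hJK, mem_univ J⟩)
  linarith

theorem amoebaComplement_subset (ha : ∀ j, 0 ≤ a j) (hb : ∀ j, 0 ≤ b j) (hc : 0 ≤ c) :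
    amoebaComplement a b c ⊆ centralRegion a b c ∪ ⋃ J, dominantRegion a b c J := by
  intro ξ hξ
  by_contra! h
  simp only [mem_union, mem_iUnion, not_or, not_exists, centralRegion, dominantRegion,
    mem_ofPred_eq, not_lt] at h
  exact hξ <| neg_mem_sum_ellipse_of_polygon_ineq (fun j => axisRe_nonneg (ha j) (hb j)) hc
    h.1 h.2

theorem axisIm_ne_zero (ha : ∀ j, 0 ≤ a j) (hb : ∀ j, 0 ≤ b j) (hc : 0 ≤ c) {ξ : ι → ℝ}
    {J : ι} (hξ : ξ ∈ amoebaComplement a b c) (hJ : ξ ∈ dominantRegion a b c J) :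
    axisIm a b ξ J ≠ 0 := fun h => hξ <| by
  simp only [dominantRegion, mem_ofPred_eq] at hJ
  refine neg_mem_sum_ellipse_of_eq_zero h (abs_le.mpr ⟨?_, ?_⟩) <;>
  linarith [Finset.sum_nonneg fun k (_ : k ∈ univ.erase J) => axisRe_nonneg (ξ := ξ) (ha k) (hb k)]

end Regions

section VertexComponent

variable {ι : Type*} [Fintype ι] [DecidableEq ι]

/-- The complement component whose order is the vertex `e_J` of the cross-polytope. -/
def vertexComponent (a b : ι → ℝ) (c : ℝ) (J : ι) : Set (ι → ℝ) :=
  amoebaComplement a b c ∩ dominantRegion a b c J ∩ {ξ | 0 < axisIm a b ξ J}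

variable {a b : ι → ℝ} {c : ℝ}

theorem mem_vertexComponent_of_lopsided (ha : ∀ j, 0 ≤ a j) (hb : ∀ j, 0 ≤ b j) (hc : 0 ≤ c)
    {ξ : ι → ℝ} {J : ι} (h : c + ∑ k ∈ univ.erase J, axisRe a b ξ k < axisIm a b ξ J) :
    ξ ∈ vertexComponent a b c J := by
  have hsum : 0 ≤ ∑ k ∈ univ.erase J, axisRe a b ξ k :=
    Finset.sum_nonneg fun k _ => axisRe_nonneg (ha k) (hb k)
  have hCA : ∀ k, |axisIm a b ξ k| ≤ axisRe a b ξ k := fun k => abs_axisIm_le_axisRe (ha k) (hb k)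
  refine ⟨⟨neg_notMem_sum_ellipse_of_lopsided hCA hc (h.trans_le (le_abs_self _)), ?_⟩, ?_⟩
  · exact h.trans_le ((le_abs_self _).trans (hCA J))
  · exact (add_nonneg hc hsum).trans_lt h

theorem update_mem_vertexComponent (ha : ∀ j, 0 ≤ a j) (hb : ∀ j, 0 ≤ b j) (hc : 0 ≤ c)
    {ξ : ι → ℝ} {J : ι} (hξ : ξ ∈ vertexComponent a b c J) {s : ℝ} (hs : ξ J ≤ s) :
    Function.update ξ J s ∈ vertexComponent a b c J := by
  obtain ⟨⟨hS, hdom⟩, hpos⟩ := hξ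
  simp only [dominantRegion, mem_ofPred_eq] at hdom hpos
  have hC : axisIm a b ξ J ≤ axisIm a b (Function.update ξ J s) J := by
    rw [axisIm_update_self]
    exact mul_exp_sub_mul_exp_neg_monotone (ha J) (hb J) hs
  have hA : axisRe a b ξ J ≤ axisRe a b (Function.update ξ J s) J := by
    rw [axisRe_update_self]
    exact mul_exp_add_mul_exp_neg_le (hb J) hpos.le hs
  have hsum : 0 ≤ ∑ k ∈ univ.erase J, axisRe a b ξ k :=
    Finset.sum_nonneg fun k _ => axisRe_nonneg (ha k) (hb k)
  refine ⟨⟨fun hmem => hS ?_, ?_⟩, hpos.trans_le hC⟩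
  · refine neg_mem_sum_ellipse_of_mem_enlarged (abs_lt.mpr ⟨by linarith, by linarith⟩) hpos.ne' hA
      (by rwa [abs_of_pos hpos, abs_of_pos (hpos.trans_le hC)])
      (fun k hk => axisRe_update_of_ne hk s) (fun k hk => axisIm_update_of_ne hk s) hmem
  · simp only [dominantRegion, mem_ofPred_eq, sum_erase_axisRe_update]
    linarith

theorem isConnected_vertexComponent (ha : ∀ j, 0 < a j) (hb : ∀ j, 0 ≤ b j) (hc : 0 ≤ c)
    (J : ι) : IsConnected (vertexComponent a b c J) := by
  have ha' : ∀ j, 0 ≤ a j := fun j => (ha j).le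
  refine ⟨?_, isPreconnected_of_forall_pair fun x hx y hy => ?_⟩
  · obtain ⟨T, -, hT⟩ := exists_ge_lt_mul_exp_sub_mul_exp_neg (ha J) (b J)
      (c + ∑ k ∈ univ.erase J, axisRe a b 0 k) 0
    exact ⟨_, mem_vertexComponent_of_lopsided ha' hb hc (ξ := Function.update 0 J T)
      (by rwa [sum_erase_axisRe_update, axisIm_update_self])⟩
  -- go up from `x` and `y` to a common lopsided level `T` and cross over within that level
  set m := max (∑ k ∈ univ.erase J, axisRe a b x k) (∑ k ∈ univ.erase J, axisRe a b y k)
  obtain ⟨T, hxyT, hT⟩ :=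
    exists_ge_lt_mul_exp_sub_mul_exp_neg (ha J) (b J) (c + m) (max (x J) (y J))
  set ray : (ι → ℝ) → Set (ι → ℝ) := fun z => (Function.update z J ·) '' Icc (z J) T
  set L := {z : ι → ℝ | z J = T} ∩ {z | ∑ k ∈ univ.erase J, axisRe a b z k ≤ m}
  have hray : ∀ z ∈ vertexComponent a b c J, ray z ⊆ vertexComponent a b c J :=
    fun z hz _ ⟨s, hs, hzs⟩ => hzs ▸ update_mem_vertexComponent ha' hb hc hz hs.1
  have hL : L ⊆ vertexComponent a b c J := fun z ⟨hzJ, hzm⟩ => by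
    refine mem_vertexComponent_of_lopsided ha' hb hc ?_
    rw [axisIm, mem_ofPred_eq.mp hzJ]
    linarith [mem_ofPred_eq.mp hzm]
  have hconv : Convex ℝ L := by
    refine (convex_hyperplane (LinearMap.proj (R := ℝ) (φ := fun _ : ι => ℝ) J).isLinear T).inter ?_
    have := (convexOn_sum_axisRe ha' hb (univ.erase J)).convex_le m
    simp only [Set.mem_univ, true_and] at this
    exact this
  have hend : ∀ z, z J ≤ T → z ∈ ray z ∧ Function.update z J T ∈ ray z := fun z hz =>
    ⟨⟨z J, ⟨le_rfl, hz⟩, Function.update_eq_self J z⟩, ⟨T, ⟨hz, le_rfl⟩, rfl⟩⟩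
  have hxT := hend x ((le_max_left _ _).trans hxyT)
  have hyT := hend y ((le_max_right _ _).trans hxyT)
  have hLx : Function.update x J T ∈ L :=
    ⟨by simp, by simp only [mem_ofPred_eq, sum_erase_axisRe_update]; exact le_max_left _ _⟩
  have hLy : Function.update y J T ∈ L :=
    ⟨by simp, by simp only [mem_ofPred_eq, sum_erase_axisRe_update]; exact le_max_right _ _⟩
  have hpre : ∀ z, IsPreconnected (ray z) := fun z => isPreconnected_Icc.image _ (by fun_prop)
  refine ⟨ray x ∪ L ∪ ray y, union_subset (union_subset (hray x hx) hL) (hray y hy),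
    .inl (.inl hxT.1), .inr hyT.1, ?_⟩
  exact ((hpre x).union _ hxT.2 hLx hconv.isPreconnected).union _ (Or.inr hLy) hyT.2 (hpre y)

end VertexComponent

section Reflection

variable {ι : Type*} [DecidableEq ι]

/-- The substitution `x_J ↦ 1 / x_J`, which swaps `a_J` and `b_J`, acts on `Log`-coordinates as
`reflect J`. -/
def reflect (J : ι) (ξ : ι → ℝ) : ι → ℝ := Function.update ξ J (-ξ J)

theorem reflect_involutive (J : ι) : Function.Involutive (reflect J) := fun ξ => by
  simp [reflect]

theorem continuous_reflect (J : ι) : Continuous (reflect J) := by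
  unfold reflect; fun_prop

variable (a b : ι → ℝ) (c : ℝ) (J : ι)

theorem axisRe_reflect (ξ : ι → ℝ) :
    axisRe (Function.update a J (b J)) (Function.update b J (a J)) (reflect J ξ) =
      axisRe a b ξ := by
  ext k
  rcases eq_or_ne k J with rfl | hk
  · simp [reflect, axisRe, add_comm]
  · simp [reflect, axisRe, hk]

theorem axisIm_reflect_self (ξ : ι → ℝ) :
    axisIm (Function.update a J (b J)) (Function.update b J (a J)) (reflect J ξ) J =
      -axisIm a b ξ J := by
  simp [reflect, axisIm]

theorem abs_axisIm_reflect (ξ : ι → ℝ) (k : ι) :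
    |axisIm (Function.update a J (b J)) (Function.update b J (a J)) (reflect J ξ) k| =
      |axisIm a b ξ k| := by
  rcases eq_or_ne k J with rfl | hk
  · rw [axisIm_reflect_self, abs_neg]
  · simp [reflect, axisIm, hk]

theorem reflect_image_vertexComponent [Fintype ι] :
    reflect J '' vertexComponent (Function.update a J (b J)) (Function.update b J (a J)) c J =
      amoebaComplement a b c ∩ dominantRegion a b c J ∩ {ξ | axisIm a b ξ J < 0} := by
  rw [(reflect_involutive J).image_eq_preimage_symm]
  ext ξ
  have hsum : ∑ j, ellipse (axisRe a b ξ j)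
      (axisIm (Function.update a J (b J)) (Function.update b J (a J)) (reflect J ξ) j) =
      ∑ j, ellipse (axisRe a b ξ j) (axisIm a b ξ j) :=
    Finset.sum_congr rfl fun k _ => ellipse_congr_abs (abs_axisIm_reflect a b J ξ k)
  simp [vertexComponent, amoebaComplement, dominantRegion, axisRe_reflect, axisIm_reflect_self,
    hsum]

end Reflection

section Count

variable {ι : Type*} [Fintype ι] [DecidableEq ι]

/-- The candidate components, indexed by the lattice points of the cross-polytope: `none` is the
origin and `some (J, true)`, `some (J, false)` are `e_J`, `-e_J`. -/
noncomputable def latticeRegion (a b : ι → ℝ) (c : ℝ) : Option (ι × Bool) → Set (ι → ℝ)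
  | none => centralRegion a b c
  | some (J, true) => dominantRegion a b c J ∩ {ξ | 0 < axisIm a b ξ J}
  | some (J, false) => dominantRegion a b c J ∩ {ξ | axisIm a b ξ J < 0}

variable {a b : ι → ℝ} {c : ℝ}

theorem latticeRegion_some_subset (J : ι) (σ : Bool) :
    latticeRegion a b c (some (J, σ)) ⊆ dominantRegion a b c J := by
  cases σ <;> exact inter_subset_left

theorem isOpen_latticeRegion : ∀ i, IsOpen (latticeRegion a b c i)
  | none => isOpen_centralRegion
  | some (J, true) => (isOpen_dominantRegion J).inter (isOpen_lt continuous_const (by fun_prop))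
  | some (J, false) => (isOpen_dominantRegion J).inter (isOpen_lt (by fun_prop) continuous_const)

theorem pairwise_disjoint_latticeRegion (ha : ∀ j, 0 ≤ a j) (hb : ∀ j, 0 ≤ b j) (hc : 0 ≤ c) :
    Pairwise (Disjoint on latticeRegion a b c) := by
  rintro (_ | ⟨J, σ⟩) (_ | ⟨K, τ⟩) hne
  · exact absurd rfl hne
  · exact (disjoint_centralRegion_dominantRegion ha hb K).mono_right
      (latticeRegion_some_subset K τ)
  · exact (disjoint_centralRegion_dominantRegion ha hb J).symm.mono_left
      (latticeRegion_some_subset J σ)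
  rcases eq_or_ne J K with rfl | hJK
  · have hστ : σ ≠ τ := fun h => hne (h ▸ rfl)
    refine Set.disjoint_left.mpr fun ξ hσ hτ => ?_
    cases σ <;> cases τ <;> simp_all [latticeRegion] <;> linarith
  · exact (disjoint_dominantRegion ha hb hc hJK).mono (latticeRegion_some_subset J σ)
      (latticeRegion_some_subset K τ)

theorem amoebaComplement_subset_iUnion_latticeRegion (ha : ∀ j, 0 ≤ a j) (hb : ∀ j, 0 ≤ b j)
    (hc : 0 ≤ c) : amoebaComplement a b c ⊆ ⋃ i, latticeRegion a b c i := by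
  intro ξ hξ
  rcases amoebaComplement_subset ha hb hc hξ with h | h
  · exact mem_iUnion.mpr ⟨none, h⟩
  obtain ⟨J, hJ⟩ := mem_iUnion.mp h
  rcases (axisIm_ne_zero ha hb hc hξ hJ).lt_or_gt with hneg | hpos
  · exact mem_iUnion.mpr ⟨some (J, false), hJ, hneg⟩
  · exact mem_iUnion.mpr ⟨some (J, true), hJ, hpos⟩

theorem isConnected_amoebaComplement_inter_latticeRegion_some (ha : ∀ j, 0 < a j)
    (hb : ∀ j, 0 < b j) (hc : 0 ≤ c) (J : ι) (σ : Bool) :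
    IsConnected (amoebaComplement a b c ∩ latticeRegion a b c (some (J, σ))) := by
  cases σ
  · rw [latticeRegion, ← inter_assoc, ← reflect_image_vertexComponent]
    have hpos : ∀ (f g : ι → ℝ), (∀ j, 0 < f j) → (∀ j, 0 < g j) →
        ∀ j, 0 < Function.update f J (g J) j := fun f g hf hg j => by
      rcases eq_or_ne j J with rfl | h <;> simp [*]
    exact (isConnected_vertexComponent (hpos a b ha hb) (fun j => (hpos b a hb ha j).le) hc
      J).image _ (continuous_reflect J).continuousOn
  · rw [latticeRegion, ← inter_assoc]
    exact isConnected_vertexComponent ha (fun j => (hb j).le) hc J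

theorem card_connectedComponents_amoebaComplement (ha : ∀ j, 0 < a j) (hb : ∀ j, 0 < b j)
    (hc : 0 ≤ c) :
    Nat.card (ConnectedComponents (amoebaComplement a b c)) =
      2 * Fintype.card ι + if ∑ j, √(a j * b j) < c / 2 then 1 else 0 := by
  have ha' : ∀ j, 0 ≤ a j := fun j => (ha j).le
  have hb' : ∀ j, 0 ≤ b j := fun j => (hb j).le
  have hcentral : amoebaComplement a b c ∩ centralRegion a b c = centralRegion a b c :=
    inter_eq_right.mpr (centralRegion_subset ha' hb')
  have hnonempty : ∀ i, (amoebaComplement a b c ∩ latticeRegion a b c i).Nonempty ↔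
      (i.isSome ∨ ∑ j, √(a j * b j) < c / 2) := by
    rintro (_ | ⟨J, σ⟩)
    · simp [latticeRegion, hcentral, centralRegion_nonempty_iff ha hb]
    · simpa using (isConnected_amoebaComplement_inter_latticeRegion_some ha hb hc J σ).nonempty
  have hconn : ∀ i, IsPreconnected (amoebaComplement a b c ∩ latticeRegion a b c i)
    | none => by
      rw [latticeRegion, hcentral]
      exact (convex_centralRegion ha' hb').isPreconnected
    | some (J, σ) => (isConnected_amoebaComplement_inter_latticeRegion_some ha hb hc J σ).2
  rw [natCard_connectedComponents_subtype_eq_of_partition isOpen_latticeRegion hconn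
    (pairwise_disjoint_latticeRegion ha' hb' hc)
    (amoebaComplement_subset_iUnion_latticeRegion ha' hb' hc),
    Nat.card_congr (Equiv.subtypeEquivRight hnonempty)]
  split_ifs with h
  · simp only [h, or_true, Nat.card_eq_fintype_card, Fintype.card_subtype_true,
      Fintype.card_option, Fintype.card_prod, Fintype.card_bool]
    ring
  · simp only [h, or_false, Nat.card_eq_fintype_card,
      Fintype.card_congr (Equiv.optionIsSomeEquiv _), Fintype.card_prod, Fintype.card_bool]
    ring

end Count

end CrossPolytopeAmoeba

theorem cross_polytope_optimal_iff_general {n : ℕ}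
    (a b : Fin n → ℝ) (c : ℝ)
    (hapos : ∀ j, 0 < a j) (hbpos : ∀ j, 0 < b j) (hc : 0 < c) :
    Nat.card
        (ConnectedComponents
          ↥(amoeba fun x : Fin n → ℂ =>
              (c : ℂ) + ∑ j, ((a j : ℂ) * x j + (b j : ℂ) * (x j)⁻¹))ᶜ) =
        2 * n + 1 ↔
      ∑ j, Real.sqrt (a j * b j) < c / 2 := by
  rw [CrossPolytopeAmoeba.compl_amoeba_eq,
    CrossPolytopeAmoeba.card_connectedComponents_amoebaComplement hapos hbpos hc.le,
    Fintype.card_fin]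
  split_ifs with h <;> simp [h]

/-- The Laurent polynomial `c + Σⱼ (aⱼ xⱼ + bⱼ/xⱼ)` with positive real
coefficients, supported in the `n`-dimensional cross-polytope (which has `2n+1`
lattice points), is optimal — its amoeba complement has exactly `2n+1`
connected components — if and only if `Σⱼ √(aⱼbⱼ) < c/2`. -/
theorem cross_polytope_optimal_iff {n : ℕ} (hn : 2 ≤ n)
    (a b : Fin n → ℝ) (c : ℝ)
    (hapos : ∀ j, 0 < a j) (hbpos : ∀ j, 0 < b j) (hc : 0 < c) :
    Nat.card
        (ConnectedComponents
          ↥(amoeba fun x : Fin n → ℂ =>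
              (c : ℂ) + ∑ j, ((a j : ℂ) * x j + (b j : ℂ) * (x j)⁻¹))ᶜ) =
        2 * n + 1 ↔
      ∑ j, Real.sqrt (a j * b j) < c / 2 :=
  cross_polytope_optimal_iff_general a b c hapos hbpos hc
end

section
/- For n ≥ 2, the hypergeometric Laurent polynomial associated with the n-dimensional cross-polytope, p_n(x) = 1 + 2^{−2^{n−1}} Σ_{j=1}^n (x_j + x_j^{-1}), is optimal (i.e. the complement ℝ^n ∖ 𝒜_{p_n} has exactly 2n+1 connected components) if and only if n > 2. -/
open Finset Function

section ConnectedComponents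

open Set

variable {X ι : Type*} [TopologicalSpace X]

lemma isClopen_of_iUnion_eq_univ {U : ι → Set X} (hopen : ∀ i, IsOpen (U i))
    (hdisj : Pairwise (Disjoint on U)) (hunion : ⋃ i, U i = univ) (i : ι) : IsClopen (U i) := by
  have hcompl : (U i)ᶜ = ⋃ (j) (_ : j ≠ i), U j := by
    ext x
    obtain ⟨j, hj⟩ := mem_iUnion.1 (hunion ▸ mem_univ x)
    simp only [mem_compl_iff, mem_iUnion, exists_prop]
    refine ⟨fun hx => ⟨j, fun h => hx (h ▸ hj), hj⟩, ?_⟩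
    rintro ⟨j', hj', hx⟩
    exact (hdisj hj').notMem_of_mem_left hx
  exact ⟨isOpen_compl_iff.1 (hcompl ▸ isOpen_biUnion fun j _ => hopen j), hopen i⟩

lemma natCard_connectedComponents_of_iUnion_eq {S : Set X} {V : ι → Set X}
    (hS : ⋃ i, V i = S) (hopen : ∀ i, IsOpen (V i)) (hconn : ∀ i, IsConnected (V i))
    (hdisj : Pairwise (Disjoint on V)) : Nat.card (ConnectedComponents S) = Nat.card ι := by
  have hsub : ∀ i, V i ⊆ S := fun i => hS ▸ subset_iUnion V i
  set U : ι → Set S := fun i => Subtype.val ⁻¹' V i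
  have hunion : ⋃ i, U i = univ := by
    rw [← preimage_iUnion, hS, Subtype.coe_preimage_self]
  have hUconn : ∀ i, IsConnected (U i) := fun i => by
    have himage : Subtype.val '' U i = V i := by
      rw [Subtype.image_preimage_coe, inter_eq_right.2 (hsub i)]
    refine ⟨?_, ?_⟩
    · obtain ⟨x, hx⟩ := (hconn i).nonempty
      exact ⟨⟨x, hsub i hx⟩, hx⟩
    · rw [← Topology.IsInducing.subtypeVal.isPreconnected_image, himage]
      exact (hconn i).isPreconnected
  exact Nat.card_congr <| ConnectedComponents.equivOfIsClopenOfIsConnected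
    (isClopen_of_iUnion_eq_univ (fun i => (hopen i).preimage continuous_subtype_val)
      (fun i j hij => (hdisj hij).preimage _) hunion) (fun i j hij => (hdisj hij).preimage _)
    hunion hUconn

end ConnectedComponents

noncomputable section

namespace CrossPolytopeAmoeba

def crossRadius (n : ℕ) : ℝ := 2 ^ (2 ^ (n - 1) - 1)

lemma two_mul_crossRadius (n : ℕ) : 2 * crossRadius n = 2 ^ 2 ^ (n - 1) := by
  rw [crossRadius, ← pow_succ', Nat.sub_add_cancel Nat.one_le_two_pow]

lemma one_le_crossRadius (n : ℕ) : 1 ≤ crossRadius n := one_le_pow₀ (by norm_num)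

lemma crossRadius_two : crossRadius 2 = 2 := by norm_num [crossRadius]

lemma lt_crossRadius {n : ℕ} (hn : 3 ≤ n) : (n : ℝ) < crossRadius n := by
  obtain ⟨m, rfl⟩ := Nat.exists_eq_add_of_le' hn
  have hexp : m + 3 ≤ 2 ^ (m + 3 - 1) - 1 := by
    have := Nat.lt_two_pow_self (n := m)
    rw [show m + 3 - 1 = m + 2 by omega, pow_add]
    omega
  have : m + 3 < 2 ^ (2 ^ (m + 3 - 1) - 1) :=
    Nat.lt_two_pow_self.trans_le (Nat.pow_le_pow_right two_pos hexp)
  rw [crossRadius]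
  exact_mod_cast this

section Amoeba

open Real Complex

def focalSum (w : ℂ) : ℝ := ‖w - 1‖ + ‖w + 1‖

lemma focalSum_neg (w : ℂ) : focalSum (-w) = focalSum w := by
  rw [focalSum, focalSum, ← norm_neg (-w - 1), ← norm_neg (-w + 1)]
  ring_nf

lemma focalSum_ofReal {r : ℝ} (hr : 1 ≤ r) : focalSum r = 2 * r := by
  rw [focalSum, ← ofReal_one, ← ofReal_sub, ← ofReal_add, norm_real, norm_real,
    Real.norm_of_nonneg (by linarith), Real.norm_of_nonneg (by linarith)]
  ring

/-- Write `w ± a` as convex combinations of `w + 1` and `w - 1`. -/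
lemma norm_add_add_norm_sub_le_focalSum (w : ℂ) {a : ℝ} (h0 : 0 ≤ a) (h1 : a ≤ 1) :
    ‖w + a‖ + ‖w - a‖ ≤ focalSum w := by
  have key : ∀ {s t : ℝ}, 0 ≤ s → 0 ≤ t →
      ‖(s : ℂ) * (w + 1) + (t : ℂ) * (w - 1)‖ ≤ s * ‖w + 1‖ + t * ‖w - 1‖ := by
    intro s t hs ht
    refine (norm_add_le _ _).trans_eq ?_
    rw [norm_mul, norm_mul, norm_real, norm_real, Real.norm_of_nonneg hs, Real.norm_of_nonneg ht]
  have e₁ : w + a = (((1 + a) / 2 : ℝ) : ℂ) * (w + 1) + (((1 - a) / 2 : ℝ) : ℂ) * (w - 1) := by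
    push_cast; ring
  have e₂ : w - a = (((1 - a) / 2 : ℝ) : ℂ) * (w + 1) + (((1 + a) / 2 : ℝ) : ℂ) * (w - 1) := by
    push_cast; ring
  have := key (s := (1 + a) / 2) (t := (1 - a) / 2) (by linarith) (by linarith)
  have := key (s := (1 - a) / 2) (t := (1 + a) / 2) (by linarith) (by linarith)
  rw [focalSum, e₁, e₂]
  linarith

lemma focalSum_add_le (v w : ℂ) : focalSum (v + w) ≤ focalSum v + focalSum w := by
  have hv := norm_add_add_norm_sub_le_focalSum v (a := 1 / 2) (by norm_num) (by norm_num)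
  have hw := norm_add_add_norm_sub_le_focalSum w (a := 1 / 2) (by norm_num) (by norm_num)
  have h₁ : ‖v + w - 1‖ ≤ ‖v - (1 / 2 : ℝ)‖ + ‖w - (1 / 2 : ℝ)‖ := by
    refine le_of_eq_of_le ?_ (norm_add_le _ _); push_cast; ring_nf
  have h₂ : ‖v + w + 1‖ ≤ ‖v + (1 / 2 : ℝ)‖ + ‖w + (1 / 2 : ℝ)‖ := by
    refine le_of_eq_of_le ?_ (norm_add_le _ _); push_cast; ring_nf
  rw [focalSum]
  linarith

lemma focalSum_half_add_inv {x : ℂ} (hx : x ≠ 0) :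
    focalSum ((x + x⁻¹) / 2) = 2 * Real.cosh (Real.log ‖x‖) := by
  have hx' : 0 < ‖x‖ := norm_pos_iff.mpr hx
  have h₁ : (x + x⁻¹) / 2 - 1 = (x - 1) ^ 2 / (2 * x) := by field_simp; ring
  have h₂ : (x + x⁻¹) / 2 + 1 = (x + 1) ^ 2 / (2 * x) := by field_simp; ring
  have parallelogram := parallelogram_law_with_norm ℝ x 1
  rw [Real.cosh_log hx', focalSum, h₁, h₂, norm_div, norm_div, norm_pow, norm_pow, norm_mul,
    Complex.norm_two]
  rw [norm_one] at parallelogram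
  field_simp
  nlinarith [parallelogram]

lemma univ_erase_nonempty {n : ℕ} (hn : 2 ≤ n) (k : Fin n) : (univ.erase k).Nonempty := by
  rw [← card_pos, card_erase_of_mem (mem_univ k), card_univ, Fintype.card_fin]
  omega

lemma focalSum_polygon_ineqs {n : ℕ} (hn : 2 ≤ n) {r : ℝ} (hr : 1 ≤ r) {w : Fin n → ℂ}
    (hw : ∑ j, w j = -r) :
    2 * r ≤ ∑ j, focalSum (w j) ∧
      ∀ k, focalSum (w k) ≤ 2 * r + ∑ i ∈ univ.erase k, focalSum (w i) := by
  refine ⟨?_, fun k => ?_⟩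
  · calc 2 * r = focalSum (∑ j, w j) := by rw [hw, focalSum_neg, focalSum_ofReal hr]
      _ ≤ ∑ j, focalSum (w j) :=
        le_sum_nonempty_of_subadditive _ focalSum_add_le (univ_nonempty_iff.2 ⟨⟨0, by omega⟩⟩) _
  · have hwk : w k = -(r + ∑ i ∈ univ.erase k, w i) := by
      linear_combination hw + add_sum_erase univ w (mem_univ k)
    calc focalSum (w k) ≤ focalSum r + focalSum (∑ i ∈ univ.erase k, w i) := by
          rw [hwk, focalSum_neg]; exact focalSum_add_le _ _
      _ ≤ 2 * r + ∑ i ∈ univ.erase k, focalSum (w i) := by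
          rw [focalSum_ofReal hr]
          gcongr
          exact le_sum_nonempty_of_subadditive _ focalSum_add_le (univ_erase_nonempty hn k) _

/-- The real numbers `r, cosh ξ₁, …, cosh ξₙ` satisfy the polygon inequalities. -/
def coshPolygon (n : ℕ) (r : ℝ) : Set (Fin n → ℝ) :=
  {ξ | r ≤ ∑ j, Real.cosh (ξ j) ∧
    ∀ k, Real.cosh (ξ k) ≤ r + ∑ i ∈ univ.erase k, Real.cosh (ξ i)}

lemma amoeba_subset_coshPolygon {n : ℕ} (hn : 2 ≤ n) {r : ℝ} (hr : 1 ≤ r) :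
    amoeba (fun x : Fin n → ℂ => 1 + (2 * (r : ℂ))⁻¹ * ∑ j, (x j + (x j)⁻¹)) ⊆
      coshPolygon n r := by
  rintro ξ ⟨x, hx, hzero, hξ⟩
  obtain rfl : ξ = fun j => Real.log ‖x j‖ := funext hξ
  have hr₀ : (r : ℂ) ≠ 0 := ofReal_ne_zero.2 (by linarith)
  have hsum : ∑ j, (x j + (x j)⁻¹) / 2 = -r := by
    rw [← sum_div]
    field_simp at hzero ⊢
    linear_combination hzero
  obtain ⟨h₁, h₂⟩ := focalSum_polygon_ineqs hn hr hsum
  simp only [focalSum_half_add_inv (hx _), ← mul_sum] at h₁ h₂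
  exact ⟨by linarith, fun k => by linarith [h₂ k]⟩

lemma cosh_add_mul_I (a θ : ℝ) :
    Complex.cosh (a + θ * I) = Real.cosh a * Real.cos θ + Real.sinh a * Real.sin θ * I := by
  rw [Complex.cosh_add, cosh_mul_I, sinh_mul_I, ← ofReal_cosh, ← ofReal_sinh, ← ofReal_cos,
    ← ofReal_sin]
  ring

/-- With `μ = sinh b / sinh a`, taking `sin α = -μ sin β` cancels the imaginary parts, and the
real part `cosh a * √(1 - (μ sin β)²) + cosh b * cos β` sweeps `[cosh a - cosh b, cosh a + cosh b]`
as `β` runs over `[0, π]`. -/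
lemma exists_cosh_add_cosh_eq {a b R : ℝ} (hba : |b| ≤ |a|)
    (hR : R ∈ Set.Icc (Real.cosh a - Real.cosh b) (Real.cosh a + Real.cosh b)) :
    ∃ α β : ℝ, Complex.cosh (a + α * I) + Complex.cosh (b + β * I) = R := by
  set μ := Real.sinh b / Real.sinh a
  have hsinh : |Real.sinh b| ≤ |Real.sinh a| := by
    rw [Real.abs_sinh, Real.abs_sinh]; exact Real.sinh_le_sinh.2 hba
  have hμ : μ * Real.sinh a = Real.sinh b := by
    rcases eq_or_ne (Real.sinh a) 0 with h | h
    · rw [h, abs_zero] at hsinh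
      rw [h, abs_nonpos_iff.1 hsinh, mul_zero]
    · exact div_mul_cancel₀ _ h
  have hμ_le : ∀ β, |μ * Real.sin β| ≤ 1 := fun β => by
    rw [abs_mul, abs_div]
    exact mul_le_one₀ (div_le_one_of_le₀ hsinh (abs_nonneg _)) (abs_nonneg _) (abs_sin_le_one β)
  set G : ℝ → ℝ := fun β => Real.cosh a * √(1 - (μ * Real.sin β) ^ 2) + Real.cosh b * Real.cos β
  have hG : Continuous G := by fun_prop
  obtain ⟨β, -, hβ⟩ : ∃ β ∈ Set.Icc 0 π, G β = R := by
    refine intermediate_value_Icc' pi_pos.le hG.continuousOn ?_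
    simpa [G, sub_eq_add_neg] using hR
  refine ⟨Real.arcsin (-(μ * Real.sin β)), β, ?_⟩
  have hsin : Real.sin (Real.arcsin (-(μ * Real.sin β))) = -(μ * Real.sin β) :=
    Real.sin_arcsin (by linarith [abs_le.1 (hμ_le β)]) (by linarith [abs_le.1 (hμ_le β)])
  rw [cosh_add_mul_I, cosh_add_mul_I, Real.cos_arcsin, hsin, ← hβ]
  simp only [G, neg_sq, ← hμ]
  push_cast
  ring

/-- Induction on `s`: the new `c a` gets the sign of the target `p`, and the rest approximates
`p ∓ c a`. -/
lemma exists_abs_sum_mul_cos_sub_le {ι : Type*} [DecidableEq ι] {s : Finset ι} {c : ι → ℝ}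
    {m p : ℝ} (hc : ∀ i ∈ s, 0 ≤ c i ∧ c i ≤ m) (hp : |p| ≤ ∑ i ∈ s, c i + m) :
    ∃ θ : ι → ℝ, (∀ i, Real.sin (θ i) = 0) ∧ |∑ i ∈ s, c i * Real.cos (θ i) - p| ≤ m := by
  induction s using Finset.induction_on generalizing p with
  | empty => exact ⟨0, fun _ => Real.sin_zero, by simpa using hp⟩
  | @insert a s ha ih =>
    obtain ⟨hca₀, hcam⟩ := hc a (mem_insert_self a s)
    have hS : 0 ≤ ∑ i ∈ s, c i := sum_nonneg fun i hi => (hc i (mem_insert_of_mem hi)).1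
    rw [sum_insert ha] at hp
    set φ : ℝ := if 0 ≤ p then 0 else π
    have hφ : |p - c a * Real.cos φ| ≤ ∑ i ∈ s, c i + m := by
      rw [abs_le] at hp ⊢
      by_cases h : 0 ≤ p <;> simp only [φ, h, if_true, if_false, Real.cos_zero, Real.cos_pi] <;>
        constructor <;> linarith
    obtain ⟨θ, hθ, hθp⟩ := ih (fun i hi => hc i (mem_insert_of_mem hi)) hφ
    refine ⟨Function.update θ a φ, fun i => ?_, ?_⟩
    · rcases eq_or_ne i a with rfl | h
      · by_cases hp : 0 ≤ p <;> simp [φ, hp]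
      · rw [Function.update_of_ne h, hθ]
    · rw [sum_insert ha, Function.update_self,
        sum_congr rfl fun i hi => by rw [Function.update_of_ne (ne_of_mem_of_not_mem hi ha)]]
      convert hθp using 2
      ring

lemma sum_eq_add_add_sum_erase_erase {M : Type*} [AddCommMonoid M] {n : ℕ} {k l : Fin n}
    (hl : l ∈ univ.erase k) (f : Fin n → M) :
    ∑ j, f j = f k + (f l + ∑ i ∈ (univ.erase k).erase l, f i) := by
  rw [add_sum_erase _ _ hl, add_sum_erase _ _ (mem_univ k)]

/-- The two coordinates of largest modulus are handled by `exists_cosh_add_cosh_eq`, all others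
by real signs. -/
lemma exists_sum_cosh_eq_of_mem_coshPolygon {n : ℕ} (hn : 2 ≤ n) {r : ℝ} {ξ : Fin n → ℝ}
    (hξ : ξ ∈ coshPolygon n r) : ∃ θ : Fin n → ℝ, ∑ j, Complex.cosh (ξ j + θ j * I) = r := by
  obtain ⟨k, -, hk⟩ := exists_max_image univ (fun j => |ξ j|) (univ_nonempty_iff.2 ⟨⟨0, by omega⟩⟩)
  obtain ⟨l, hl, hlmax⟩ := exists_max_image (univ.erase k) (fun j => |ξ j|)
    (univ_erase_nonempty hn k)
  have hlk : l ≠ k := ne_of_mem_erase hl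
  set s := (univ.erase k).erase l
  have hpoly := hξ.2 k
  rw [← add_sum_erase _ _ hl] at hpoly
  have hsum := hξ.1
  rw [sum_eq_add_add_sum_erase_erase hl] at hsum
  obtain ⟨θ₀, hsin, hτ⟩ := exists_abs_sum_mul_cos_sub_le (s := s) (c := fun i => Real.cosh (ξ i))
    (m := Real.cosh (ξ l)) (p := r - Real.cosh (ξ k))
    (fun i hi => ⟨(Real.cosh_pos _).le, Real.cosh_le_cosh.2 (hlmax i (mem_of_mem_erase hi))⟩)
    (by rw [abs_le]; constructor <;> linarith)
  set τ := ∑ i ∈ s, Real.cosh (ξ i) * Real.cos (θ₀ i)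
  rw [abs_le] at hτ
  obtain ⟨α, β, hαβ⟩ := exists_cosh_add_cosh_eq (R := r - τ) (hk l (mem_univ l))
    ⟨by linarith, by linarith⟩
  have hs : ∑ i ∈ s, Complex.cosh (ξ i + θ₀ i * I) = τ := by
    simp only [cosh_add_mul_I, hsin, ofReal_zero, mul_zero, zero_mul, add_zero, τ]
    push_cast
    rfl
  refine ⟨Function.update (Function.update θ₀ l β) k α, ?_⟩
  rw [sum_eq_add_add_sum_erase_erase hl, ← add_assoc]
  simp only [Function.update_self, Function.update_of_ne hlk]
  rw [sum_congr rfl fun i hi => by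
    rw [Function.update_of_ne (ne_of_mem_erase (mem_of_mem_erase hi)),
      Function.update_of_ne (ne_of_mem_erase hi)], hαβ, hs]
  push_cast
  ring

lemma coshPolygon_subset_amoeba {n : ℕ} (hn : 2 ≤ n) {r : ℝ} (hr : r ≠ 0) :
    coshPolygon n r ⊆
      amoeba (fun x : Fin n → ℂ => 1 + (2 * (r : ℂ))⁻¹ * ∑ j, (x j + (x j)⁻¹)) := by
  intro ξ hξ
  obtain ⟨θ, hθ⟩ := exists_sum_cosh_eq_of_mem_coshPolygon hn hξ
  refine ⟨fun j => -Complex.exp (ξ j + θ j * I), fun j => neg_ne_zero.2 (Complex.exp_ne_zero _),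
    ?_, fun j => ?_⟩
  · have hterm : ∀ z : ℂ, -Complex.exp z + (-Complex.exp z)⁻¹ = -(2 * Complex.cosh z) := by
      intro z; rw [inv_neg, ← Complex.exp_neg, two_cosh]; ring
    have hr' : (r : ℂ) ≠ 0 := ofReal_ne_zero.2 hr
    simp only [hterm, sum_neg_distrib, ← mul_sum, hθ]
    field_simp
    ring
  · rw [norm_neg, Complex.norm_exp, add_re, ofReal_re, re_ofReal_mul, I_re, mul_zero, add_zero,
      Real.log_exp]

theorem amoeba_eq_coshPolygon {n : ℕ} (hn : 2 ≤ n) {r : ℝ} (hr : 1 ≤ r) :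
    amoeba (fun x : Fin n → ℂ => 1 + (2 * (r : ℂ))⁻¹ * ∑ j, (x j + (x j)⁻¹)) =
      coshPolygon n r :=
  (amoeba_subset_coshPolygon hn hr).antisymm
    (coshPolygon_subset_amoeba hn (zero_lt_one.trans_le hr).ne')

end Amoeba

section Complement

open Real

def coshBall (n : ℕ) (r : ℝ) : Set (Fin n → ℝ) := {ξ | ∑ j, cosh (ξ j) < r}

def coshTentacle (n : ℕ) (r : ℝ) (k : Fin n) (ε : ℤˣ) : Set (Fin n → ℝ) :=
  {ξ | 0 < (ε : ℝ) * ξ k ∧ r + ∑ i ∈ univ.erase k, cosh (ξ i) < cosh (ξ k)}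

variable {n : ℕ} {r : ℝ}

lemma isOpen_coshBall : IsOpen (coshBall n r) :=
  isOpen_lt (by fun_prop) continuous_const

lemma isOpen_coshTentacle (k : Fin n) (ε : ℤˣ) : IsOpen (coshTentacle n r k ε) := by
  rw [coshTentacle, Set.ofPred_and]
  exact (isOpen_lt continuous_const (by fun_prop)).inter (isOpen_lt (by fun_prop) (by fun_prop))

lemma cosh_smul_le (ξ : Fin n → ℝ) {b : ℝ} (hb₀ : 0 ≤ b) (hb₁ : b ≤ 1) (i : Fin n) :
    cosh ((b • ξ) i) ≤ cosh (ξ i) := by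
  rw [Real.cosh_le_cosh, Pi.smul_apply, smul_eq_mul, abs_mul, abs_of_nonneg hb₀]
  exact mul_le_of_le_one_left (abs_nonneg _) hb₁

lemma isConnected_coshBall (h : (n : ℝ) < r) : IsConnected (coshBall n r) := by
  refine (StarConvex.isPathConnected (a := 0) ?_ (by simpa [coshBall] using h)).isConnected
  intro ξ hξ a b _ hb hab
  rw [smul_zero, zero_add]
  exact (sum_le_sum fun i _ => cosh_smul_le ξ hb (by linarith) i).trans_lt hξ

lemma card_le_sum_cosh (s : Finset (Fin n)) (ξ : Fin n → ℝ) :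
    (#s : ℝ) ≤ ∑ i ∈ s, cosh (ξ i) := by
  simpa using s.card_nsmul_le_sum _ 1 fun i _ => Real.one_le_cosh (ξ i)

lemma coshBall_eq_empty (h : r ≤ n) : coshBall n r = ∅ :=
  Set.eq_empty_of_forall_notMem fun ξ hξ => by
    have := card_le_sum_cosh univ ξ
    rw [card_univ, Fintype.card_fin] at this
    exact (h.trans this).not_gt hξ

lemma unit_mul_self (ε : ℤˣ) : (ε : ℝ) * ε = 1 := by
  rcases Int.units_eq_one_or ε with rfl | rfl <;> norm_num

lemma cosh_unit_mul (ε : ℤˣ) (x : ℝ) : cosh ((ε : ℝ) * x) = cosh x := by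
  rcases Int.units_eq_one_or ε with rfl | rfl <;> simp

lemma exists_pos_lt_cosh (C : ℝ) : ∃ u, 0 < u ∧ C < cosh u :=
  ⟨|C| + 1, by positivity, by
    linarith [le_abs_self C, Real.self_le_sinh_iff.2 (by positivity : 0 ≤ |C| + 1),
      Real.sinh_lt_cosh (|C| + 1)]⟩

lemma single_mem_coshTentacle {k : Fin n} {ε : ℤˣ} {t : ℝ} :
    Pi.single k t ∈ coshTentacle n r k ε ↔
      0 < (ε : ℝ) * t ∧ r + #(univ.erase k) < cosh t := by
  simp only [coshTentacle, Set.mem_ofPred_eq, Pi.single_eq_same]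
  rw [sum_congr rfl fun i hi => by rw [Pi.single_eq_of_ne (ne_of_mem_erase hi), Real.cosh_zero],
    sum_const, nsmul_one]

lemma mem_coshTentacle_of_abs_le {k : Fin n} {ε : ℤˣ} {ξ η : Fin n → ℝ}
    (hξ : ξ ∈ coshTentacle n r k ε) (hk : η k = ξ k) (h : ∀ i ≠ k, |η i| ≤ |ξ i|) :
    η ∈ coshTentacle n r k ε := by
  refine ⟨hk ▸ hξ.1, lt_of_le_of_lt ?_ (hk ▸ hξ.2)⟩
  gcongr with i hi
  exact Real.cosh_le_cosh.2 (h i (ne_of_mem_erase hi))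

/-- Each point is joined, by a segment contracting the coordinates other than the `k`-th, to the ray
of the tentacle on the `k`-th axis. -/
lemma isConnected_coshTentacle (k : Fin n) (ε : ℤˣ) : IsConnected (coshTentacle n r k ε) := by
  set C := r + #(univ.erase k)
  set J : Set ℝ := {u | 0 < u ∧ C < cosh u}
  set L := (fun u => (Pi.single k ((ε : ℝ) * u) : Fin n → ℝ)) '' J
  have hJ : J.OrdConnected := ⟨fun a ha b _ u hu =>
    ⟨ha.1.trans_le hu.1, ha.2.trans_le (Real.cosh_le_cosh.2 (by
      rw [abs_of_pos ha.1, abs_of_pos (ha.1.trans_le hu.1)]; exact hu.1))⟩⟩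
  have hL : IsPreconnected L := hJ.isPreconnected.image _
    ((continuous_single k).comp (continuous_const_mul _) :
      Continuous fun u : ℝ => (Pi.single k ((ε : ℝ) * u) : Fin n → ℝ)).continuousOn
  have hLsub : L ⊆ coshTentacle n r k ε := by
    rintro _ ⟨u, hu, rfl⟩
    rw [single_mem_coshTentacle, ← mul_assoc, unit_mul_self, one_mul, cosh_unit_mul]
    exact hu
  have hproj : ∀ ξ ∈ coshTentacle n r k ε, Pi.single k (ξ k) ∈ L := fun ξ hξ => by
    refine ⟨(ε : ℝ) * ξ k, ⟨hξ.1, ?_⟩, by simp only [← mul_assoc, unit_mul_self, one_mul]⟩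
    rw [cosh_unit_mul]
    linarith [hξ.2, card_le_sum_cosh (univ.erase k) ξ]
  have hseg : ∀ ξ ∈ coshTentacle n r k ε,
      segment ℝ ξ (Pi.single k (ξ k)) ⊆ coshTentacle n r k ε := by
    rintro ξ hξ _ ⟨a, b, ha, hb, hab, rfl⟩
    refine mem_coshTentacle_of_abs_le hξ (by simp [← add_mul, hab]) fun i hi => ?_
    simp only [Pi.add_apply, Pi.smul_apply, smul_eq_mul, Pi.single_eq_of_ne hi, mul_zero, add_zero,
      abs_mul, abs_of_nonneg ha]
    exact mul_le_of_le_one_left (abs_nonneg _) (by linarith)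
  obtain ⟨x₀, hx₀⟩ : L.Nonempty := Set.Nonempty.image _ (exists_pos_lt_cosh C)
  refine ⟨⟨x₀, hLsub hx₀⟩, isPreconnected_of_forall x₀ fun ξ hξ => ?_⟩
  exact ⟨segment ℝ ξ (Pi.single k (ξ k)) ∪ L, Set.union_subset (hseg ξ hξ) hLsub,
    Or.inr hx₀, Or.inl (left_mem_segment ℝ _ _),
    (convex_segment _ _).isPreconnected.union _ (right_mem_segment ℝ _ _) (hproj ξ hξ) hL⟩

lemma coshBall_subset_compl : coshBall n r ⊆ (coshPolygon n r)ᶜ :=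
  fun _ hξ hW => hξ.not_ge hW.1

lemma coshTentacle_subset_compl (k : Fin n) (ε : ℤˣ) :
    coshTentacle n r k ε ⊆ (coshPolygon n r)ᶜ :=
  fun _ hξ hW => hξ.2.not_ge (hW.2 k)

lemma compl_coshPolygon (hr : 1 ≤ r) :
    (coshPolygon n r)ᶜ = coshBall n r ∪ ⋃ (k) (ε), coshTentacle n r k ε := by
  refine subset_antisymm (fun ξ hξ => ?_)
    (Set.union_subset coshBall_subset_compl (Set.iUnion₂_subset coshTentacle_subset_compl))
  simp only [coshPolygon, Set.mem_compl_iff, Set.mem_ofPred_eq, not_and_or, not_le,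
    not_forall] at hξ
  rcases hξ with hball | ⟨k, hk⟩
  · exact Or.inl hball
  have hξk : ξ k ≠ 0 := fun h0 => by
    rw [h0, Real.cosh_zero] at hk
    linarith [sum_nonneg fun i (_ : i ∈ univ.erase k) => (cosh_pos (ξ i)).le]
  refine Or.inr (Set.mem_iUnion₂.2 ?_)
  rcases hξk.lt_or_gt with hneg | hpos
  · exact ⟨k, -1, by simpa using hneg, hk⟩
  · exact ⟨k, 1, by simpa using hpos, hk⟩

lemma disjoint_coshBall_coshTentacle (k : Fin n) (ε : ℤˣ) :
    Disjoint (coshBall n r) (coshTentacle n r k ε) :=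
  Set.disjoint_left.2 fun ξ hball htent => by
    have hsplit := add_sum_erase univ (fun i => cosh (ξ i)) (mem_univ k)
    have hrest := sum_nonneg fun i (_ : i ∈ univ.erase k) => (cosh_pos (ξ i)).le
    linarith [htent.2, show ∑ j, cosh (ξ j) < r from hball]

lemma pairwise_disjoint_coshTentacle (hr : 0 ≤ r) :
    Pairwise (Disjoint on fun p : Fin n × ℤˣ => coshTentacle n r p.1 p.2) := by
  rintro ⟨k, ε⟩ ⟨k', ε'⟩ hne
  refine Set.disjoint_left.2 fun ξ h h' => ?_
  rcases eq_or_ne k k' with rfl | hk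
  · obtain rfl : ε = -ε' := Int.units_ne_iff_eq_neg.1 fun h => hne (by rw [h])
    have := h.1
    have := h'.1
    push_cast at *
    linarith
  · have := single_le_sum (fun i _ => (cosh_pos (ξ i)).le) (mem_erase.2 ⟨hk.symm, mem_univ k'⟩)
    have := single_le_sum (fun i _ => (cosh_pos (ξ i)).le) (mem_erase.2 ⟨hk, mem_univ k⟩)
    linarith [h.2, h'.2]

lemma natCard_components_compl_coshPolygon_of_lt (hr : 1 ≤ r) (hnr : (n : ℝ) < r) :
    Nat.card (ConnectedComponents ↥(coshPolygon n r)ᶜ) = 2 * n + 1 := by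
  rw [natCard_connectedComponents_of_iUnion_eq (ι := Option (Fin n × ℤˣ))
    (V := fun o => o.elim (coshBall n r) fun p => coshTentacle n r p.1 p.2)]
  · simp [Fintype.card_units_int]
    ring
  · rw [Set.iUnion_option, compl_coshPolygon hr, Set.iUnion_prod']
    rfl
  · rintro (_ | ⟨k, ε⟩)
    exacts [isOpen_coshBall, isOpen_coshTentacle k ε]
  · rintro (_ | ⟨k, ε⟩)
    exacts [isConnected_coshBall hnr, isConnected_coshTentacle k ε]
  · rintro (_ | p) (_ | q) hne
    · exact absurd rfl hne
    · exact disjoint_coshBall_coshTentacle q.1 q.2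
    · exact (disjoint_coshBall_coshTentacle p.1 p.2).symm
    · exact pairwise_disjoint_coshTentacle (by linarith) fun h => hne (congrArg some h)

lemma natCard_components_compl_coshPolygon_of_le (hr : 1 ≤ r) (hrn : r ≤ n) :
    Nat.card (ConnectedComponents ↥(coshPolygon n r)ᶜ) = 2 * n := by
  rw [natCard_connectedComponents_of_iUnion_eq (ι := Fin n × ℤˣ)
    (V := fun p => coshTentacle n r p.1 p.2) _ (fun p => isOpen_coshTentacle p.1 p.2)
    (fun p => isConnected_coshTentacle p.1 p.2) (pairwise_disjoint_coshTentacle (by linarith))]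
  · simp [Fintype.card_units_int]
    ring
  · rw [compl_coshPolygon hr, coshBall_eq_empty hrn, Set.empty_union, Set.iUnion_prod']

end Complement

end CrossPolytopeAmoeba

end

open CrossPolytopeAmoeba in
/-- The hypergeometric Laurent polynomial of the `n`-dimensional cross-polytope,
`pₙ(x) = 1 + 2^{−2^{n−1}} Σⱼ (xⱼ + xⱼ⁻¹)`, is optimal — the complement of its
amoeba has exactly `2n+1` connected components — if and only if `n > 2`. -/
theorem cross_polytope_hypergeometric_optimal_iff {n : ℕ} (hn : 2 ≤ n) :
    Nat.card
        (ConnectedComponents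
          ↥(amoeba fun x : Fin n → ℂ =>
              1 + ((2 : ℂ) ^ (2 ^ (n - 1)))⁻¹ * ∑ j, (x j + (x j)⁻¹))ᶜ) =
        2 * n + 1 ↔
      2 < n := by
  have hcoeff : (2 : ℂ) ^ 2 ^ (n - 1) = 2 * (crossRadius n : ℂ) := by
    exact_mod_cast (two_mul_crossRadius n).symm
  rw [hcoeff, amoeba_eq_coshPolygon hn (one_le_crossRadius n)]
  rcases hn.eq_or_lt with rfl | h3
  · rw [natCard_components_compl_coshPolygon_of_le (one_le_crossRadius 2)
      (by rw [crossRadius_two]; norm_num)]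
    norm_num
  · rw [natCard_components_compl_coshPolygon_of_lt (one_le_crossRadius n) (lt_crossRadius h3)]
    exact iff_of_true rfl h3
end

section
/- In ℂ[u,v] one has the polynomial identity u^2 + v^2 + 4u^2v^2 + u^4v^2 + u^2v^4 = (u(1+v^2) + i·v(1+u^2)) · (u(1+v^2) − i·v(1+u^2)). In particular, if p(x,y) = x + y + 4xy + x^2y + xy^2, then p(u^2, v^2) is reducible in ℂ[u,v], so p is not strongly irreducible. -/
open MvPolynomial

local notation "u" => (X 0 : MvPolynomial (Fin 2) ℂ)
local notation "v" => (X 1 : MvPolynomial (Fin 2) ℂ)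

theorem MvPolynomial.not_isUnit_of_constantCoeff_eq_zero {R σ : Type*} [CommSemiring R]
    [Nontrivial R] {p : MvPolynomial σ R} (hp : constantCoeff p = 0) : ¬IsUnit p :=
  fun h => not_isUnit_zero (hp ▸ h.map constantCoeff)

theorem not_irreducible_of_eq_mul {M : Type*} [Monoid M] {p a b : M} (h : p = a * b)
    (ha : ¬IsUnit a) (hb : ¬IsUnit b) : ¬Irreducible p :=
  fun hp => (hp.isUnit_or_isUnit h).elim ha hb

/-- In `ℂ[u,v]` one has
`u² + v² + 4u²v² + u⁴v² + u²v⁴ = (u(1+v²) + i·v(1+u²))·(u(1+v²) − i·v(1+u²))`;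
in particular, for `p(x,y) = x + y + 4xy + x²y + xy²` the polynomial `p(u²,v²)`
is reducible in `ℂ[u,v]`, so `p` is not strongly irreducible. -/
theorem cross_polytope_poly_factors :
    (u ^ 2 + v ^ 2 + 4 * u ^ 2 * v ^ 2 + u ^ 4 * v ^ 2 + u ^ 2 * v ^ 4 =
        (u * (1 + v ^ 2) + C Complex.I * v * (1 + u ^ 2)) *
          (u * (1 + v ^ 2) - C Complex.I * v * (1 + u ^ 2))) ∧
      ¬ Irreducible
          (u ^ 2 + v ^ 2 + 4 * u ^ 2 * v ^ 2 + u ^ 4 * v ^ 2 + u ^ 2 * v ^ 4) := by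
  have hI : (C Complex.I : MvPolynomial (Fin 2) ℂ) ^ 2 = -1 := by
    rw [← C_pow, Complex.I_sq, map_neg, map_one]
  have factorization :
      u ^ 2 + v ^ 2 + 4 * u ^ 2 * v ^ 2 + u ^ 4 * v ^ 2 + u ^ 2 * v ^ 4 =
        (u * (1 + v ^ 2) + C Complex.I * v * (1 + u ^ 2)) *
          (u * (1 + v ^ 2) - C Complex.I * v * (1 + u ^ 2)) := by
    linear_combination (v ^ 2 * (1 + u ^ 2) ^ 2) * hI
  refine ⟨factorization, not_irreducible_of_eq_mul factorization ?_ ?_⟩ <;>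
    exact not_isUnit_of_constantCoeff_eq_zero (by simp)
end

section
/- The polynomial p(x,y) = x + y + 4xy + x^2y + xy^2 is not optimal: the number of connected components of the complement ℝ^2 ∖ 𝒜_p of its amoeba is strictly less than 5, the number of lattice points of its Newton polygon (the quadrilateral with vertices (1,0),(0,1),(2,1),(1,2), containing also the interior point (1,1)). -/
/-- The amoeba of a function on the torus `(ℂ∖{0})²`. -/
def amoeba2 (f : ℂ → ℂ → ℂ) : Set (ℝ × ℝ) :=
  {ξ | ∃ x y : ℂ, x ≠ 0 ∧ y ≠ 0 ∧ f x y = 0 ∧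
        ξ = (Real.log ‖x‖, Real.log ‖y‖)}

/-!
Dividing by `xy`, the amoeba is the set of points `(log ‖x‖, log ‖y‖)` with
`(x + x⁻¹) + (y + y⁻¹) = -4`. The Joukowski map `z ↦ z + z⁻¹` sends the circle `‖z‖ = eᵘ` onto
the ellipse with foci `±2` and sum of focal distances `4 cosh u`. At a common point of this ellipse
and of the `v`-ellipse translated by `-4`, the two sums of focal distances differ by at most the
distance `8` between the foci `2` and `-6`, so `|cosh u - cosh v| ≤ 2`; conversely, the
intermediate value theorem along the circle produces such a common point. Hence the complement of
the amoeba is `{2 < |cosh u - cosh v|}`, the union of the four strict epigraphs of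
`t ↦ arcosh (cosh t + 2)` in the directions `±u` and `±v`: it has at most four components.
-/

open Real Set

theorem norm_add_inv_sub_two_add_norm_add_inv_add_two {x : ℂ} (hx : x ≠ 0) :
    ‖x + x⁻¹ - 2‖ + ‖x + x⁻¹ + 2‖ = 4 * cosh (log ‖x‖) := by
  have hsub : x + x⁻¹ - 2 = (x - 1) ^ 2 / x := by field_simp; ring
  have hadd : x + x⁻¹ + 2 = (x + 1) ^ 2 / x := by field_simp; ring
  have hpar : ‖x - 1‖ ^ 2 + ‖x + 1‖ ^ 2 = 2 * (‖x‖ ^ 2 + 1) := by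
    simp only [Complex.sq_norm, Complex.normSq_apply, Complex.sub_re, Complex.sub_im,
      Complex.add_re, Complex.add_im, Complex.one_re, Complex.one_im]
    ring
  rw [hsub, hadd, norm_div, norm_div, norm_pow, norm_pow, cosh_log (norm_pos_iff.2 hx)]
  field_simp
  linear_combination 2 * hpar

theorem exists_add_inv_eq_and_log_norm_eq {w : ℂ} {v : ℝ}
    (h : ‖w - 2‖ + ‖w + 2‖ = 4 * cosh v) : ∃ y ≠ 0, y + y⁻¹ = w ∧ log ‖y‖ = v := by
  obtain ⟨y, hy⟩ := exists_quadratic_eq_zero one_ne_zero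
    (IsAlgClosed.exists_eq_mul_self (discrim 1 (-w) 1))
  have hy0 : y ≠ 0 := by rintro rfl; simp at hy
  have hyw : y + y⁻¹ = w := by field_simp; linear_combination hy
  rw [← hyw, norm_add_inv_sub_two_add_norm_add_inv_add_two hy0] at h
  have habs : |log ‖y‖| = |v| :=
    cosh_injOn (abs_nonneg (log ‖y‖)) (abs_nonneg v) (by simp only [cosh_abs]; linarith)
  rcases abs_eq_abs.1 habs with hv | hv
  · exact ⟨y, hy0, hyw, hv⟩
  · refine ⟨y⁻¹, inv_ne_zero hy0, by rw [inv_inv, ← hyw, add_comm], ?_⟩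
    rw [norm_inv, log_inv, hv, neg_neg]

theorem cosh_log_norm_le_of_add_inv_add_add_inv_add_four_eq_zero {x y : ℂ}
    (hx : x ≠ 0) (hy : y ≠ 0) (h : x + x⁻¹ + (y + y⁻¹) + 4 = 0) :
    cosh (log ‖x‖) ≤ cosh (log ‖y‖) + 2 := by
  set w := y + y⁻¹
  have hxw₁ : x + x⁻¹ - 2 = -(w - 2 + 8) := by linear_combination h
  have hxw₂ : x + x⁻¹ + 2 = -(w + 2) := by linear_combination h
  have key : 4 * cosh (log ‖x‖) ≤ 4 * cosh (log ‖y‖) + 8 := calc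
    4 * cosh (log ‖x‖) = ‖w - 2 + 8‖ + ‖w + 2‖ := by
      rw [← norm_add_inv_sub_two_add_norm_add_inv_add_two hx, hxw₁, hxw₂, norm_neg, norm_neg]
    _ ≤ ‖w - 2‖ + ‖(8 : ℂ)‖ + ‖w + 2‖ := by gcongr; exact norm_add_le _ _
    _ = 4 * cosh (log ‖y‖) + 8 := by
      rw [← norm_add_inv_sub_two_add_norm_add_inv_add_two hy]; norm_num; ring
  linarith

theorem exists_add_inv_add_add_inv_add_four_eq_zero {u v : ℝ}
    (huv : cosh u ≤ cosh v + 2) (hvu : cosh v ≤ cosh u + 2) :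
    ∃ x y : ℂ, x ≠ 0 ∧ y ≠ 0 ∧ x + x⁻¹ + (y + y⁻¹) + 4 = 0 ∧ log ‖x‖ = u ∧ log ‖y‖ = v := by
  -- the sum of the distances from `z + z⁻¹` to the foci `-2`, `-6` of the translated `v`-ellipse
  set f : ℂ → ℝ := fun z => ‖z + z⁻¹ + 2‖ + ‖z + z⁻¹ + 6‖
  have hcirc : IsConnected (Metric.sphere (0 : ℂ) (exp u)) :=
    isConnected_sphere (by simp [Complex.rank_real_complex]) 0 (exp_pos u).le
  have hf : ContinuousOn f (Metric.sphere 0 (exp u)) := by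
    have hinv : ContinuousOn (fun z : ℂ => z⁻¹) (Metric.sphere 0 (exp u)) :=
      continuousOn_id.inv₀ fun z hz => by
        rw [mem_sphere_zero_iff_norm] at hz
        simp [← norm_pos_iff, hz, exp_pos]
    exact (((continuousOn_id.add hinv).add continuousOn_const).norm).add
      ((continuousOn_id.add hinv).add continuousOn_const).norm
  have hJ : (exp u : ℂ) + (exp u : ℂ)⁻¹ = (2 * cosh u : ℝ) := by
    rw [cosh_eq, exp_neg]; push_cast; ring
  have hJneg : -(exp u : ℂ) + (-(exp u : ℂ))⁻¹ = (-(2 * cosh u) : ℝ) := by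
    rw [inv_neg, ← neg_add, hJ, Complex.ofReal_neg]
  have hfpos : f (exp u) = |2 * cosh u + 2| + |2 * cosh u + 6| := by
    simp only [f, hJ]; norm_cast
  have hfneg : f (-exp u) = |-(2 * cosh u) + 2| + |-(2 * cosh u) + 6| := by
    simp only [f, hJneg]; norm_cast
  have hu1 := one_le_cosh u
  have hv1 := one_le_cosh v
  obtain ⟨x, hx, hfx⟩ : ∃ x ∈ Metric.sphere (0 : ℂ) (exp u), f x = 4 * cosh v := by
    refine hcirc.isPreconnected.intermediate_value (a := -exp u) (b := exp u) (by simp) (by simp)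
      hf ⟨?_, ?_⟩
    · rw [hfneg]
      rcases abs_cases (-(2 * cosh u) + 6) with h | h <;>
        rw [abs_of_nonpos (by linarith)] <;> linarith
    · rw [hfpos, abs_of_pos (by linarith), abs_of_pos (by linarith)]; linarith
  rw [mem_sphere_zero_iff_norm] at hx
  have hx0 : x ≠ 0 := by rw [← norm_pos_iff, hx]; exact exp_pos u
  obtain ⟨y, hy0, hyx, hyv⟩ := exists_add_inv_eq_and_log_norm_eq (w := -(x + x⁻¹ + 4)) (v := v)
    (by rw [← hfx, add_comm]; congr 1 <;> rw [← norm_neg] <;> congr 1 <;> ring)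
  exact ⟨x, y, hx0, hy0, by rw [hyx]; ring, by rw [hx, log_exp], hyv⟩

theorem arcosh_lt_iff_lt_cosh {x y : ℝ} (hx : 1 ≤ x) (hy : 0 ≤ y) :
    arcosh x < y ↔ x < cosh y := by
  have h := arcosh_lt_arcosh (zero_lt_one.trans_le hx) (cosh_pos y)
  rwa [arcosh_cosh hy] at h

theorem isPreconnected_setOf_lt_snd {X : Type*} [TopologicalSpace X] [PreconnectedSpace X]
    {g : X → ℝ} (hg : Continuous g) : IsPreconnected {p : X × ℝ | g p.1 < p.2} := by
  have h : {p : X × ℝ | g p.1 < p.2} =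
      (fun q : X × ℝ => (q.1, g q.1 + q.2)) '' (univ ×ˢ Ioi 0) := by
    ext ⟨x, t⟩
    constructor
    · intro h
      exact ⟨(x, t - g x), ⟨trivial, show 0 < t - g x from sub_pos.2 h⟩, by simp⟩
    · rintro ⟨⟨y, s⟩, ⟨-, hs⟩, hq⟩
      simp only [Prod.mk.injEq] at hq
      obtain ⟨rfl, rfl⟩ := hq
      simpa using hs
  rw [h]
  exact (isPreconnected_univ.prod isPreconnected_Ioi).image _ (by fun_prop)

theorem natCard_connectedComponents_le_of_cover {X ι : Type*} [TopologicalSpace X] [Finite ι]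
    {S : Set X} (s : ι → Set X) (hs : ∀ i, IsPreconnected (s i)) (hsS : ∀ i, s i ⊆ S)
    (hS : S ⊆ ⋃ i, s i) : Nat.card (ConnectedComponents S) ≤ Nat.card ι := by
  choose idx hidx using fun x : S => mem_iUnion.1 (hS x.2)
  refine Nat.card_le_card_of_injective (fun c => idx (Quotient.out c)) fun c c' hcc' => ?_
  rw [← Quotient.out_eq c, ← Quotient.out_eq c']
  set x := Quotient.out c
  set x' := Quotient.out c'
  have hx' : (x' : X) ∈ connectedComponentIn S x :=
    (hs (idx x)).subset_connectedComponentIn (hidx x) (hsS _)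
      (by rw [show idx x = idx x' from hcc']; exact hidx x')
  rw [connectedComponentIn_eq_image x.2, Subtype.val_injective.mem_set_image] at hx'
  exact (ConnectedComponents.coe_eq_coe'.2 hx').symm

theorem amoeba2_eq_setOf_abs_cosh_sub_cosh_le_two :
    amoeba2 (fun x y => x + y + 4 * x * y + x ^ 2 * y + x * y ^ 2) =
      {p | |cosh p.1 - cosh p.2| ≤ 2} := by
  have hlaurent : ∀ x y : ℂ, x ≠ 0 → y ≠ 0 →
      x + y + 4 * x * y + x ^ 2 * y + x * y ^ 2 = x * y * (x + x⁻¹ + (y + y⁻¹) + 4) := by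
    intro x y hx hy; field_simp; ring
  ext ⟨u, v⟩
  simp only [amoeba2, mem_ofPred_eq, Prod.mk.injEq, abs_le]
  constructor
  · rintro ⟨x, y, hx, hy, hp, rfl, rfl⟩
    rw [hlaurent x y hx hy, mul_eq_zero, mul_eq_zero] at hp
    have h : x + x⁻¹ + (y + y⁻¹) + 4 = 0 := by tauto
    have hxy := cosh_log_norm_le_of_add_inv_add_add_inv_add_four_eq_zero hx hy h
    have hyx := cosh_log_norm_le_of_add_inv_add_add_inv_add_four_eq_zero hy hx
      (by linear_combination h)
    constructor <;> linarith
  · rintro ⟨h₁, h₂⟩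
    obtain ⟨x, y, hx, hy, h, rfl, rfl⟩ :=
      exists_add_inv_add_add_inv_add_four_eq_zero (u := u) (v := v) (by linarith) (by linarith)
    exact ⟨x, y, hx, hy, by rw [hlaurent x y hx hy, h, mul_zero], rfl, rfl⟩

theorem natCard_connectedComponents_setOf_two_lt_abs_cosh_sub_cosh_le :
    Nat.card (ConnectedComponents {p : ℝ × ℝ | 2 < |cosh p.1 - cosh p.2|}) ≤ 4 := by
  set g : ℝ → ℝ := fun t => arcosh (cosh t + 2)
  have hg : Continuous g := continuousOn_arcosh.comp_continuous (by fun_prop) fun t => by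
    simp only [mem_Ici]; linarith [one_le_cosh t]
  have hgap : ∀ p : ℝ × ℝ, g p.1 < |p.2| ∨ g p.2 < |p.1| ↔ 2 < |cosh p.1 - cosh p.2| := by
    intro p
    simp only [g]
    rw [arcosh_lt_iff_lt_cosh (by linarith [one_le_cosh p.1]) (abs_nonneg _),
      arcosh_lt_iff_lt_cosh (by linarith [one_le_cosh p.2]) (abs_nonneg _), cosh_abs, cosh_abs,
      lt_abs, or_comm]
    exact or_congr (by constructor <;> intro <;> linarith) (by constructor <;> intro <;> linarith)
  -- the preimages of the epigraph `{g p.1 < p.2}` are the epigraphs in the directions `±v`, `±u`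
  let negSnd : ℝ × ℝ ≃ₜ ℝ × ℝ := (Homeomorph.refl ℝ).prodCongr (Homeomorph.neg ℝ)
  let e : Fin 4 → ℝ × ℝ ≃ₜ ℝ × ℝ :=
    ![.refl _, negSnd, .prodComm ℝ ℝ, (Homeomorph.prodComm ℝ ℝ).trans negSnd]
  refine (natCard_connectedComponents_le_of_cover (fun i => e i ⁻¹' {p | g p.1 < p.2})
    (fun i => (e i).isPreconnected_preimage.2 (isPreconnected_setOf_lt_snd hg)) ?_ ?_).trans
    (by simp)
  · intro i p hp
    rw [mem_ofPred_eq, ← hgap]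
    fin_cases i
    exacts [.inl (lt_abs.2 (.inl hp)), .inl (lt_abs.2 (.inr hp)), .inr (lt_abs.2 (.inl hp)),
      .inr (lt_abs.2 (.inr hp))]
  · intro p hp
    rw [mem_ofPred_eq, ← hgap, lt_abs, lt_abs] at hp
    rw [mem_iUnion]
    rcases hp with (h | h) | h | h
    exacts [⟨0, h⟩, ⟨1, h⟩, ⟨2, h⟩, ⟨3, h⟩]

/-- The polynomial `p(x,y) = x + y + 4xy + x²y + xy²` is not optimal: the number
of connected components of the complement of its amoeba is strictly smaller
than `5`, the number of lattice points of its Newton polygon. -/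
theorem cross_polytope_poly_not_optimal :
    Nat.card
        (ConnectedComponents
          ↥(amoeba2 fun x y =>
              x + y + 4 * x * y + x ^ 2 * y + x * y ^ 2)ᶜ) < 5 := by
  have hcompl : {p : ℝ × ℝ | |cosh p.1 - cosh p.2| ≤ 2}ᶜ = {p | 2 < |cosh p.1 - cosh p.2|} := by
    ext; simp
  rw [amoeba2_eq_setOf_abs_cosh_sub_cosh_le_two, hcompl]
  exact natCard_connectedComponents_setOf_two_lt_abs_cosh_sub_cosh_le.trans_lt (by norm_num)
end

section
/- Let S ⊂ ℝ^n be a finite set such that the origin 0 lies in the interior of the convex hull of S, and let a_s > 0 for each s ∈ S. Then the function g(ξ) = Σ_{s∈S} a_s exp(⟨s, ξ⟩) is strictly convex on ℝ^n, tends to +∞ as |ξ| → ∞, and attains its infimum on ℝ^n at a unique point ρ ∈ ℝ^n. -/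
/-!
Since `0` is interior to the convex hull of `S`, every `ξ` has some `s ∈ S` with
`ε‖ξ‖ ≤ ⟨s, ξ⟩`: pair `ξ` with a point of a small ball around `0` and maximise the linear
functional `⟨·, ξ⟩` over the hull at a vertex. Hence `g ξ ≥ (min a) · exp (ε‖ξ‖)`, so `g` is
coercive; and the vectors of `S` separate points, so at least one of the convex terms
`a_s exp ⟨s, ξ⟩` is strictly convex along any segment, making `g` strictly convex. A continuous
coercive function has a minimum, and strict convexity makes it unique.
-/

open Filter Set Real

section DotProduct

variable {ι : Type*} [Fintype ι]

lemma exists_norm_le_one_norm_le_dotProduct (ξ : ι → ℝ) :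
    ∃ v : ι → ℝ, ‖v‖ ≤ 1 ∧ ‖ξ‖ ≤ v ⬝ᵥ ξ := by
  refine ⟨fun i => (SignType.sign (ξ i) : ℝ),
    (pi_norm_le_iff_of_nonneg zero_le_one).2 fun i => ?_, ?_⟩
  · generalize SignType.sign (ξ i) = t
    cases t <;> simp
  · simp only [dotProduct, sign_mul_self]
    exact (pi_norm_le_iff_of_nonneg (by positivity)).2 fun i =>
      (Real.norm_eq_abs _).trans_le <|
        Finset.single_le_sum (f := fun i => |ξ i|) (fun _ _ => abs_nonneg _) (Finset.mem_univ i)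

lemma exists_mul_norm_le_dotProduct_of_zero_mem_interior_convexHull {S : Set (ι → ℝ)}
    (h0 : 0 ∈ interior (convexHull ℝ S)) :
    ∃ ε > 0, ∀ ξ : ι → ℝ, ∃ s ∈ S, ε * ‖ξ‖ ≤ s ⬝ᵥ ξ := by
  obtain ⟨ε, hε, hball⟩ := Metric.nhds_basis_closedBall.mem_iff.1 (mem_interior_iff_mem_nhds.1 h0)
  refine ⟨ε, hε, fun ξ => ?_⟩
  obtain ⟨v, hv1, hvξ⟩ := exists_norm_le_one_norm_le_dotProduct ξ
  have hv : ε • v ∈ convexHull ℝ S := hball <| mem_closedBall_zero_iff.2 <| by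
    simpa [norm_smul, abs_of_pos hε] using mul_le_mul_of_nonneg_left hv1 hε.le
  obtain ⟨s, hs, hle⟩ := (((dotProductBilin ℝ ℝ).flip ξ).convexOn convex_univ)
    |>.exists_ge_of_mem_convexHull (subset_univ S) hv
  refine ⟨s, hs, le_trans ?_ hle⟩
  simpa only [LinearMap.flip_apply, dotProductBilin_apply_apply, smul_dotProduct, smul_eq_mul]
    using mul_le_mul_of_nonneg_left hvξ hε.le

theorem strictConvexOn_sum_mul_exp_dotProduct {S : Finset (ι → ℝ)} {a : (ι → ℝ) → ℝ}
    (ha : ∀ s ∈ S, 0 < a s) (hS : ∀ ξ ≠ 0, ∃ s ∈ S, s ⬝ᵥ ξ ≠ 0) :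
    StrictConvexOn ℝ univ fun ξ => ∑ s ∈ S, a s * exp (s ⬝ᵥ ξ) := by
  refine ⟨convex_univ, fun ξ _ η _ hξη p q hp hq hpq => ?_⟩
  have hcomb (s : ι → ℝ) : s ⬝ᵥ (p • ξ + q • η) = p • (s ⬝ᵥ ξ) + q • (s ⬝ᵥ η) := by
    rw [dotProduct_add, dotProduct_smul, dotProduct_smul]
  have hterm : ∀ s ∈ S, a s * exp (s ⬝ᵥ (p • ξ + q • η)) ≤
      p • (a s * exp (s ⬝ᵥ ξ)) + q • (a s * exp (s ⬝ᵥ η)) := fun s hs => by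
    rw [hcomb, ← mul_smul_comm, ← mul_smul_comm, ← mul_add]
    exact mul_le_mul_of_nonneg_left (convexOn_exp.2 trivial trivial hp.le hq.le hpq) (ha s hs).le
  obtain ⟨s, hs, hne⟩ := hS (ξ - η) (sub_ne_zero.2 hξη)
  have hstrict : a s * exp (s ⬝ᵥ (p • ξ + q • η)) <
      p • (a s * exp (s ⬝ᵥ ξ)) + q • (a s * exp (s ⬝ᵥ η)) := by
    rw [hcomb, ← mul_smul_comm, ← mul_smul_comm, ← mul_add]
    refine mul_lt_mul_of_pos_left (strictConvexOn_exp.2 trivial trivial ?_ hp hq hpq) (ha s hs)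
    rwa [Ne, ← sub_eq_zero, ← dotProduct_sub]
  simpa only [Finset.smul_sum, ← Finset.sum_add_distrib]
    using Finset.sum_lt_sum hterm ⟨s, hs, hstrict⟩

theorem tendsto_sum_mul_exp_dotProduct_cocompact {S : Finset (ι → ℝ)} {a : (ι → ℝ) → ℝ}
    (ha : ∀ s ∈ S, 0 < a s) {ε : ℝ} (hε : 0 < ε) (hS : ∀ ξ : ι → ℝ, ∃ s ∈ S, ε * ‖ξ‖ ≤ s ⬝ᵥ ξ) :
    Tendsto (fun ξ => ∑ s ∈ S, a s * exp (s ⬝ᵥ ξ)) (cocompact (ι → ℝ)) atTop := by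
  have hSne : S.Nonempty := let ⟨s, hs, _⟩ := hS 0; ⟨s, hs⟩
  have hm : 0 < S.inf' hSne a := (Finset.lt_inf'_iff hSne).2 ha
  have hlb (ξ : ι → ℝ) : S.inf' hSne a * exp (ε * ‖ξ‖) ≤ ∑ s ∈ S, a s * exp (s ⬝ᵥ ξ) := by
    obtain ⟨s, hs, hle⟩ := hS ξ
    calc S.inf' hSne a * exp (ε * ‖ξ‖) ≤ a s * exp (s ⬝ᵥ ξ) :=
          mul_le_mul (Finset.inf'_le a hs) (exp_le_exp.2 hle) (exp_pos _).le (ha s hs).le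
      _ ≤ ∑ s ∈ S, a s * exp (s ⬝ᵥ ξ) :=
          Finset.single_le_sum (f := fun t => a t * exp (t ⬝ᵥ ξ))
            (fun t ht => (mul_pos (ha t ht) (exp_pos _)).le) hs
  have hexp : Tendsto (fun r => S.inf' hSne a * exp (ε * r)) atTop atTop :=
    (tendsto_exp_atTop.comp (tendsto_id.const_mul_atTop hε)).const_mul_atTop hm
  exact tendsto_atTop_mono hlb (hexp.comp tendsto_norm_cocompact_atTop)

end DotProduct

theorem StrictConvexOn.existsUnique_forall_le {E : Type*} [AddCommGroup E] [Module ℝ E]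
    [TopologicalSpace E] [Nonempty E] {f : E → ℝ} (hf : StrictConvexOn ℝ univ f) (hc : Continuous f)
    (htop : Tendsto f (cocompact E) atTop) : ∃! x, ∀ y, f x ≤ f y := by
  obtain ⟨x, hx⟩ := hc.exists_forall_le htop
  exact ⟨x, hx, fun y hy => hf.eq_of_isMinOn (fun z _ => hy z) (fun z _ => hx z) trivial trivial⟩

/-- Let `S ⊂ ℝⁿ` be a finite set with the origin in the interior of its convex
hull and let `a_s > 0` for `s ∈ S`.  Then `g(ξ) = Σ_{s∈S} a_s exp⟨s,ξ⟩` is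
strictly convex on `ℝⁿ`, tends to `+∞` as `|ξ| → ∞`, and attains its infimum at
a unique point `ρ ∈ ℝⁿ`. -/
theorem exp_sum_strictly_convex_unique_min {n : ℕ}
    (S : Finset (Fin n → ℝ))
    (h0 : (0 : Fin n → ℝ) ∈ interior (convexHull ℝ (↑S : Set (Fin n → ℝ))))
    (a : (Fin n → ℝ) → ℝ) (ha : ∀ s ∈ S, 0 < a s) :
    StrictConvexOn ℝ Set.univ
        (fun ξ : Fin n → ℝ => ∑ s ∈ S, a s * Real.exp (∑ i, s i * ξ i)) ∧
      Tendsto (fun ξ : Fin n → ℝ => ∑ s ∈ S, a s * Real.exp (∑ i, s i * ξ i))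
        (cocompact (Fin n → ℝ)) atTop ∧
      ∃! ρ : Fin n → ℝ, ∀ ξ : Fin n → ℝ,
        ∑ s ∈ S, a s * Real.exp (∑ i, s i * ρ i) ≤
          ∑ s ∈ S, a s * Real.exp (∑ i, s i * ξ i) := by
  obtain ⟨ε, hε, hS⟩ := exists_mul_norm_le_dotProduct_of_zero_mem_interior_convexHull h0
  have hconv := strictConvexOn_sum_mul_exp_dotProduct ha fun ξ hξ =>
    let ⟨s, hs, hle⟩ := hS ξ
    ⟨s, hs, (lt_of_lt_of_le (mul_pos hε (norm_pos_iff.2 hξ)) hle).ne'⟩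
  have htop := tendsto_sum_mul_exp_dotProduct_cocompact ha hε hS
  exact ⟨hconv, htop, hconv.existsUnique_forall_le (by fun_prop) htop⟩
end
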